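/- arXiv:2308.14096 — 8 statements merged into one kernel-verified Lean document; each statement's English description precedes it below -/
import Mathlib

section
/- Let (P, ≤, ·, P#) be a partial combinatory algebra. Let DP be the complete lattice of downward-closed subsets of P ordered by inclusion, and define X → Y := { z ∈ P | for all x ∈ X, z·x is defined and z·x ∈ Y }. Then (DP, ⊆, →) is an arrow structure that is compatible with joins (i.e., (⨆_{X ∈ B} X) → Y = ⨅_{X ∈ B} (X → Y) for all families B ⊆ DP and Y ∈ DP), and S := { X ∈ DP | X ∩ P# ≠ ∅ } is a separator on it: S is upward closed, closed under modus ponens, and contains the combinators 𝐤, 𝐬 and 𝐚 of this arrow structure. -/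
/-- The combinator 𝐤 := ⨅ a b, a → (b → a). -/
def kC {A : Type*} [CompleteLattice A] (arr : A → A → A) : A :=
  ⨅ (a : A) (b : A), arr a (arr b a)

/-- The combinator 𝐬 := ⨅ a b c, (a → (b → c)) → ((a → b) → (a → c)). -/
def sC {A : Type*} [CompleteLattice A] (arr : A → A → A) : A :=
  ⨅ (a : A) (b : A) (c : A),
    arr (arr a (arr b c)) (arr (arr a b) (arr a c))

/-- The combinator 𝐚 := ⨅_{x, B ⊆ Im(→)} (⨅_{b ∈ B} x → b) → (x → ⨅ B). -/
def aC {A : Type*} [CompleteLattice A] (arr : A → A → A) : A :=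
  ⨅ (x : A) (B : Set A) (_ : B ⊆ Set.range fun p : A × A => arr p.1 p.2),
    arr (⨅ b ∈ B, arr x b) (arr x (sInf B))

/-- An arrow structure on a complete lattice: the implication is antitone in its
first argument and monotone in its second. -/
structure IsArrow {A : Type*} [CompleteLattice A] (arr : A → A → A) : Prop where
  mono : ∀ {a a' b b' : A}, a' ≤ a → b ≤ b' → arr a b ≤ arr a' b'

/-- A separator on an arrow structure. -/
structure IsSeparator {A : Type*} [CompleteLattice A] (arr : A → A → A) (S : Set A) : Prop where
  up : ∀ {a b : A}, a ∈ S → a ≤ b → b ∈ S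
  mp : ∀ {a b : A}, arr a b ∈ S → a ∈ S → b ∈ S
  kmem : kC arr ∈ S
  smem : sC arr ∈ S
  amem : aC arr ∈ S

/-- A partial combinatory algebra on a poset, with a filter. -/
structure PCA (P : Type*) [PartialOrder P] where
  app : P → P → Option P
  mono : ∀ {a a' b b' x : P}, app a' b' = some x → a ≤ a' → b ≤ b' →
    ∃ y, app a b = some y ∧ y ≤ x
  filt : Set P
  filt_up : ∀ {a b : P}, a ∈ filt → a ≤ b → b ∈ filt
  filt_app : ∀ {a b c : P}, a ∈ filt → b ∈ filt → app a b = some c → c ∈ filt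
  k : P
  s : P
  k_mem : k ∈ filt
  s_mem : s ∈ filt
  k_spec : ∀ a b : P, ∃ ka, app k a = some ka ∧ app ka b = some a
  s_def : ∀ a b : P, ∃ sa sab, app s a = some sa ∧ app sa b = some sab
  s_spec : ∀ {a b c ac bc x sa sab : P}, app a c = some ac → app b c = some bc →
    app ac bc = some x → app s a = some sa → app sa b = some sab →
    ∃ y, app sab c = some y ∧ y ≤ x

/-- The implication on the complete lattice of downward closed subsets of a pca:
`X → Y := { z | ∀ x ∈ X, z·x is defined and z·x ∈ Y }`. -/
def pcaArr {P : Type*} [PartialOrder P] (Q : PCA P) (X Y : LowerSet P) : LowerSet P :=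
  ⟨{z | ∀ x ∈ X, ∃ w, Q.app z x = some w ∧ w ∈ Y}, by
    intro a b hba ha x hx
    obtain ⟨w, hw, hwY⟩ := ha x hx
    obtain ⟨w', hw', hle⟩ := Q.mono hw hba le_rfl
    exact ⟨w', hw', Y.lower hle hwY⟩⟩

/-!
`pcaArr` is the realizability implication on downsets, so the arrow laws and compatibility
with joins are set-theoretic, and modus ponens is closure of the filter under application.
`Q.k` and `Q.s` realize `𝐤` and `𝐬` directly. For `𝐚` one cannot use the identity: for
`B = ∅` we have `⨅ B = ⊤`, and `x → ⊤` still demands that application be defined. The realizer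
is the η-expansion `λzwr. z w r`, built by combinatory abstraction: an abstraction is always
defined, so `e z w` is, and since every member of `B` is an arrow `p → q`, the fact that
`e z w r ≤ z w r` for `r ∈ p` is all that membership in `⨅ B` asks for.
-/

namespace PCA

variable {P : Type*} [PartialOrder P] (Q : PCA P)

section Combinators

variable {Q}

theorem app_app_k {a ka : P} (h : Q.app Q.k a = some ka) (b : P) : Q.app ka b = some a := by
  obtain ⟨ka', hka', hb⟩ := Q.k_spec a b
  rwa [Option.some.inj (h.symm.trans hka')]

theorem exists_app_of_app_s {a sa : P} (h : Q.app Q.s a = some sa) (b : P) :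
    ∃ sab, Q.app sa b = some sab := by
  obtain ⟨sa', sab, hsa', hb⟩ := Q.s_def a b
  rw [Option.some.inj (h.symm.trans hsa')]
  exact ⟨sab, hb⟩

theorem app_skk_le {sk i : P} (hsk : Q.app Q.s Q.k = some sk) (hi : Q.app sk Q.k = some i)
    (a : P) : ∃ y, Q.app i a = some y ∧ y ≤ a := by
  obtain ⟨ka, hka, -⟩ := Q.k_spec a a
  exact Q.s_spec hka hka (app_app_k hka ka) hsk hi

end Combinators

inductive Term (V : Type*)
  | var : V → Term V
  | k : Term V
  | s : Term V
  | app : Term V → Term V → Term V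

/-- Bracket abstraction of the variable `none`. -/
def Term.lam {V : Type*} : Term (Option V) → Term V
  | .var none => .app (.app .s .k) .k
  | .var (some v) => .app .k (.var v)
  | .k => .app .k .k
  | .s => .app .k .s
  | .app M N => .app (.app .s M.lam) N.lam

def eval {V : Type*} (ρ : V → P) : Term V → Option P
  | .var v => some (ρ v)
  | .k => some Q.k
  | .s => some Q.s
  | .app M N => (eval ρ M).bind fun m => (eval ρ N).bind (Q.app m)

section Eval

variable {Q} {V : Type*}

@[simp]
theorem eval_var (ρ : V → P) (v : V) : Q.eval ρ (.var v) = some (ρ v) := rfl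

@[simp]
theorem eval_k (ρ : V → P) : Q.eval ρ .k = some Q.k := rfl

@[simp]
theorem eval_s (ρ : V → P) : Q.eval ρ .s = some Q.s := rfl

theorem eval_app_eq_some {ρ : V → P} {M N : Term V} {v : P} :
    Q.eval ρ (.app M N) = some v ↔
      ∃ m, Q.eval ρ M = some m ∧ ∃ n, Q.eval ρ N = some n ∧ Q.app m n = some v := by
  simp only [eval, Option.bind_eq_some_iff]

theorem eval_mem_filt {ρ : V → P} (hρ : ∀ v, ρ v ∈ Q.filt) {M : Term V} {x : P}
    (h : Q.eval ρ M = some x) : x ∈ Q.filt := by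
  induction M generalizing x with
  | var v => exact Option.some.inj h ▸ hρ v
  | k => exact Option.some.inj h ▸ Q.k_mem
  | s => exact Option.some.inj h ▸ Q.s_mem
  | app M N ihM ihN =>
    obtain ⟨m, hm, n, hn, hmn⟩ := eval_app_eq_some.mp h
    exact Q.filt_app (ihM hm) (ihN hn) hmn

theorem exists_eval_lam (ρ : V → P) (M : Term (Option V)) : ∃ m, Q.eval ρ M.lam = some m := by
  induction M with
  | var v =>
    cases v with
    | none =>
      obtain ⟨sk, skk, hsk, hskk⟩ := Q.s_def Q.k Q.k
      exact ⟨skk, eval_app_eq_some.mpr ⟨sk, eval_app_eq_some.mpr ⟨_, rfl, _, rfl, hsk⟩,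
        _, rfl, hskk⟩⟩
    | some v =>
      obtain ⟨kv, hkv, -⟩ := Q.k_spec (ρ v) (ρ v)
      exact ⟨kv, eval_app_eq_some.mpr ⟨_, rfl, _, rfl, hkv⟩⟩
  | k =>
    obtain ⟨kk, hkk, -⟩ := Q.k_spec Q.k Q.k
    exact ⟨kk, eval_app_eq_some.mpr ⟨_, rfl, _, rfl, hkk⟩⟩
  | s =>
    obtain ⟨ks, hks, -⟩ := Q.k_spec Q.s Q.s
    exact ⟨ks, eval_app_eq_some.mpr ⟨_, rfl, _, rfl, hks⟩⟩
  | app M N ihM ihN =>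
    obtain ⟨m, hm⟩ := ihM
    obtain ⟨n, hn⟩ := ihN
    obtain ⟨sm, smn, hsm, hsmn⟩ := Q.s_def m n
    exact ⟨smn, eval_app_eq_some.mpr ⟨sm, eval_app_eq_some.mpr ⟨_, rfl, _, hm, hsm⟩,
      n, hn, hsmn⟩⟩

theorem app_eval_lam_le {ρ : V → P} {M : Term (Option V)} {m a v : P}
    (hm : Q.eval ρ M.lam = some m) (hv : Q.eval (Option.elim' a ρ) M = some v) :
    ∃ w, Q.app m a = some w ∧ w ≤ v := by
  induction M generalizing m v with
  | var x =>
    cases x with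
    | none =>
      obtain rfl : a = v := Option.some.inj hv
      simp only [Term.lam, eval_app_eq_some, eval_k, eval_s, Option.some.injEq,
        exists_eq_left'] at hm
      obtain ⟨sk, hsk, hm⟩ := hm
      exact app_skk_le hsk hm a
    | some x =>
      simp only [Term.lam, eval_app_eq_some, eval_k, eval_var, Option.some.injEq,
        exists_eq_left'] at hm
      exact ⟨v, app_app_k (Option.some.inj hv ▸ hm) a, le_rfl⟩
  | k | s =>
    simp only [Term.lam, eval_app_eq_some, eval_k, eval_s, Option.some.injEq,
      exists_eq_left'] at hm
    exact ⟨v, app_app_k (Option.some.inj hv ▸ hm) a, le_rfl⟩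
  | app M N ihM ihN =>
    obtain ⟨vM, hvM, vN, hvN, hv⟩ := eval_app_eq_some.mp hv
    simp only [Term.lam, eval_app_eq_some, eval_s, Option.some.injEq, exists_eq_left'] at hm
    obtain ⟨sm, ⟨m', hm', hsm⟩, n, hn, hm⟩ := hm
    obtain ⟨wM, hwM, hwM_le⟩ := ihM hm' hvM
    obtain ⟨wN, hwN, hwN_le⟩ := ihN hn hvN
    obtain ⟨x, hx, hx_le⟩ := Q.mono hv hwM_le hwN_le
    obtain ⟨y, hy, hy_le⟩ := Q.s_spec hwM hwN hx hsm hm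
    exact ⟨y, hy, hy_le.trans hx_le⟩

theorem app_le_of_le_eval_lam {ρ : V → P} {M : Term (Option V)} {c m a v : P} (hc : c ≤ m)
    (hm : Q.eval ρ M.lam = some m) (hv : Q.eval (Option.elim' a ρ) M = some v) :
    ∃ w, Q.app c a = some w ∧ w ≤ v := by
  obtain ⟨w, hw, hwv⟩ := app_eval_lam_le hm hv
  obtain ⟨w', hw', hw'w⟩ := Q.mono hw hc le_rfl
  exact ⟨w', hw', hw'w.trans hwv⟩

end Eval

theorem exists_eta : ∃ e ∈ Q.filt, ∀ z, ∃ ez, Q.app e z = some ez ∧ ∀ w, ∃ ezw,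
    Q.app ez w = some ezw ∧ ∀ r zw y, Q.app z w = some zw → Q.app zw r = some y →
      ∃ y', Q.app ezw r = some y' ∧ y' ≤ y := by
  let zwr : Term (Option (Option (Option Empty))) :=
    .app (.app (.var (some (some none))) (.var (some none))) (.var none)
  let ρ₀ : Empty → P := isEmptyElim
  obtain ⟨e, he⟩ := exists_eval_lam ρ₀ zwr.lam.lam
  refine ⟨e, eval_mem_filt isEmptyElim he, fun z => ?_⟩
  obtain ⟨l₁, hl₁⟩ := exists_eval_lam (Option.elim' z ρ₀) zwr.lam
  obtain ⟨ez, hez, hez_le⟩ := app_le_of_le_eval_lam le_rfl he hl₁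
  refine ⟨ez, hez, fun w => ?_⟩
  obtain ⟨l₂, hl₂⟩ := exists_eval_lam (Option.elim' w (Option.elim' z ρ₀)) zwr
  obtain ⟨ezw, hezw, hezw_le⟩ := app_le_of_le_eval_lam hez_le hl₁ hl₂
  refine ⟨ezw, hezw, fun r zw y hzw hy => ?_⟩
  exact app_le_of_le_eval_lam hezw_le hl₂
    (eval_app_eq_some.mpr ⟨zw, eval_app_eq_some.mpr ⟨z, rfl, w, rfl, hzw⟩, r, rfl, hy⟩)

@[simp]
theorem mem_pcaArr {X Y : LowerSet P} {z : P} :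
    z ∈ pcaArr Q X Y ↔ ∀ x ∈ X, ∃ w, Q.app z x = some w ∧ w ∈ Y := Iff.rfl

theorem isArrow_pcaArr : IsArrow (pcaArr Q) where
  mono hX hY _ hz x hx :=
    let ⟨w, hw, hwY⟩ := hz x (hX hx)
    ⟨w, hw, hY hwY⟩

theorem pcaArr_sSup_left (B : Set (LowerSet P)) (Y : LowerSet P) :
    pcaArr Q (sSup B) Y = ⨅ X ∈ B, pcaArr Q X Y := by
  refine le_antisymm (le_iInf₂ fun X hX => (isArrow_pcaArr Q).mono (le_sSup hX) le_rfl) ?_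
  intro z hz x hx
  obtain ⟨X, hX, hxX⟩ := LowerSet.mem_sSup_iff.mp hx
  exact LowerSet.mem_iInf₂_iff.mp hz X hX x hxX

theorem k_mem_kC_pcaArr : Q.k ∈ kC (pcaArr Q) := by
  simp only [kC, LowerSet.mem_iInf_iff, mem_pcaArr]
  intro a b x hx
  obtain ⟨kx, hkx, -⟩ := Q.k_spec x x
  exact ⟨kx, hkx, fun y _ => ⟨x, app_app_k hkx y, hx⟩⟩

theorem s_mem_sC_pcaArr : Q.s ∈ sC (pcaArr Q) := by
  simp only [sC, LowerSet.mem_iInf_iff, mem_pcaArr]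
  intro a b c f hf
  obtain ⟨sf, -, hsf, -⟩ := Q.s_def f f
  refine ⟨sf, hsf, fun g hg => ?_⟩
  obtain ⟨sfg, hsfg⟩ := exists_app_of_app_s hsf g
  refine ⟨sfg, hsfg, fun u hu => ?_⟩
  obtain ⟨fu, hfu, hfu_mem⟩ := hf u hu
  obtain ⟨gu, hgu, hgu_mem⟩ := hg u hu
  obtain ⟨v, hv, hv_mem⟩ := hfu_mem gu hgu_mem
  obtain ⟨y, hy, hyv⟩ := Q.s_spec hfu hgu hv hsf hsfg
  exact ⟨y, hy, c.lower hyv hv_mem⟩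

theorem exists_mem_filt_mem_aC_pcaArr : ∃ e ∈ Q.filt, e ∈ aC (pcaArr Q) := by
  obtain ⟨e, he, heta⟩ := exists_eta Q
  refine ⟨e, he, ?_⟩
  simp only [aC, LowerSet.mem_iInf_iff]
  intro x B hB z hz
  obtain ⟨ez, hez, hezw⟩ := heta z
  refine ⟨ez, hez, fun w hw => ?_⟩
  obtain ⟨ezw, hezw, hezwr⟩ := hezw w
  refine ⟨ezw, hezw, LowerSet.mem_sInf_iff.mpr fun b hb => ?_⟩
  obtain ⟨⟨_, q⟩, rfl⟩ := hB hb
  intro r hr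
  obtain ⟨zw, hzw, hzw_mem⟩ := LowerSet.mem_iInf₂_iff.mp hz _ hb w hw
  obtain ⟨y, hy, hy_mem⟩ := hzw_mem r hr
  obtain ⟨y', hy', hy'y⟩ := hezwr r zw y hzw hy
  exact ⟨y', hy', q.lower hy'y hy_mem⟩

theorem isSeparator_pcaArr : IsSeparator (pcaArr Q) {X : LowerSet P | ∃ p ∈ Q.filt, p ∈ X} where
  up := fun ⟨p, hp, hpX⟩ hXY => ⟨p, hp, hXY hpX⟩
  mp := fun ⟨_, hp, hpXY⟩ ⟨q, hq, hqX⟩ =>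
    let ⟨w, hw, hwY⟩ := hpXY q hqX
    ⟨w, Q.filt_app hp hq hw, hwY⟩
  kmem := ⟨Q.k, Q.k_mem, k_mem_kC_pcaArr Q⟩
  smem := ⟨Q.s, Q.s_mem, s_mem_sC_pcaArr Q⟩
  amem := exists_mem_filt_mem_aC_pcaArr Q

end PCA

/-- Theorem 3.10: the downsets of a pca form an arrow structure which is compatible
with joins, and the downsets meeting the filter form a separator on it. -/
theorem stmt2 {P : Type*} [PartialOrder P] (Q : PCA P) :
    IsArrow (pcaArr Q) ∧
    (∀ (B : Set (LowerSet P)) (Y : LowerSet P),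
      pcaArr Q (sSup B) Y = ⨅ X ∈ B, pcaArr Q X Y) ∧
    IsSeparator (pcaArr Q) {X : LowerSet P | ∃ p ∈ Q.filt, p ∈ X} :=
  ⟨Q.isArrow_pcaArr, Q.pcaArr_sSup_left, Q.isSeparator_pcaArr⟩
end

section
/- Let (A, ≼, →, S) be an arrow algebra and j a nucleus on it. Define a →_j b := a → j(b) and S_j := { a ∈ A | j(a) ∈ S }. Then A_j = (A, ≼, →_j, S_j) is an arrow algebra: →_j is antitone in its first and monotone in its second argument, and S_j is upward closed, closed under modus ponens with respect to →_j, and contains the combinators 𝐤_j, 𝐬_j and 𝐚_j formed with →_j. Moreover, if A is compatible with joins (i.e., (⨆ B) → a = ⨅_{b ∈ B} (b → a) for all a ∈ A and B ⊆ A), then so is A_j. -/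
/-- A nucleus on an arrow algebra: a monotone map `j` with
`⨅ a, a → j a ∈ S` and `⨅ a b, (a → j b) → (j a → j b) ∈ S`. -/
structure IsNucleus {A : Type*} [CompleteLattice A] (arr : A → A → A) (S : Set A)
    (j : A → A) : Prop where
  mono : Monotone j
  h1 : (⨅ a : A, arr a (j a)) ∈ S
  h2 : (⨅ (a : A) (b : A), arr (arr a (j b)) (arr (j a) (j b))) ∈ S

namespace Stmt6Aux

variable {A : Type*} [CompleteLattice A] {arr : A → A → A} {S : Set A} {j : A → A}

/-- Image of the arrow. -/
def Im (arr : A → A → A) : Set A := Set.range fun p : A × A => arr p.1 p.2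

theorem mem_Im (arr : A → A → A) (x y : A) : arr x y ∈ Im arr := ⟨(x, y), rfl⟩

/-- Application. -/
noncomputable def ap (arr : A → A → A) (u v : A) : A :=
  sInf {c | c ∈ Im arr ∧ u ≤ arr v c}

theorem ap_le {u v c : A} (h : u ≤ arr v c) (hc : c ∈ Im arr) : ap arr u v ≤ c :=
  sInf_le ⟨hc, h⟩

theorem kC_le (a b : A) : kC arr ≤ arr a (arr b a) := by
  unfold kC; exact iInf_le_of_le a (iInf_le _ b)

theorem sC_le (a b c : A) :
    sC arr ≤ arr (arr a (arr b c)) (arr (arr a b) (arr a c)) := by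
  unfold sC; exact iInf_le_of_le a (iInf_le_of_le b (iInf_le _ c))

theorem aC_le {B : Set A} (x : A) (hB : B ⊆ Im arr) :
    aC arr ≤ arr (⨅ b ∈ B, arr x b) (arr x (sInf B)) := by
  unfold aC; exact iInf_le_of_le x (iInf_le_of_le B (iInf_le _ hB))

theorem ap_mem (hS : IsSeparator arr S) {u v : A}
    (hu : u ∈ S) (hv : v ∈ S) : ap arr u v ∈ S := by
  have hB : {c | c ∈ Im arr ∧ u ≤ arr v c} ⊆ Im arr := fun c hc => hc.1
  have h1 : arr (⨅ b ∈ {c | c ∈ Im arr ∧ u ≤ arr v c}, arr v b)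
      (arr v (sInf {c | c ∈ Im arr ∧ u ≤ arr v c})) ∈ S :=
    hS.up hS.amem (aC_le v hB)
  have h3 : (⨅ b ∈ {c | c ∈ Im arr ∧ u ≤ arr v c}, arr v b) ∈ S :=
    hS.up hu (le_iInf₂ fun c hc => hc.2)
  exact hS.mp (hS.mp h1 h3) hv

/-- The B combinator (composition): `B = S (K S) K` style construction. -/
noncomputable def Bc (arr : A → A → A) : A :=
  ap arr (ap arr (sC arr) (ap arr (kC arr) (sC arr))) (kC arr)

theorem Bc_le (hA : IsArrow arr) (x y z : A) :
    Bc arr ≤ arr (arr y z) (arr (arr x y) (arr x z)) := by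
  have hks : ap arr (kC arr) (sC arr) ≤
      arr (arr y z) (arr (arr x (arr y z)) (arr (arr x y) (arr x z))) := by
    refine ap_le ?_ (mem_Im arr _ _)
    exact le_trans (kC_le _ _) (hA.mono (sC_le x y z) le_rfl)
  have hsks : ap arr (sC arr) (ap arr (kC arr) (sC arr)) ≤
      arr (arr (arr y z) (arr x (arr y z))) (arr (arr y z) (arr (arr x y) (arr x z))) := by
    refine ap_le ?_ (mem_Im arr _ _)
    exact le_trans (sC_le (arr y z) (arr x (arr y z)) (arr (arr x y) (arr x z)))
      (hA.mono hks le_rfl)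
  refine ap_le ?_ (mem_Im arr _ _)
  exact le_trans hsks (hA.mono (kC_le (arr y z) x) le_rfl)

theorem Bc_mem (hS : IsSeparator arr S) : Bc arr ∈ S :=
  ap_mem hS (ap_mem hS hS.smem (ap_mem hS hS.kmem hS.smem)) hS.kmem

/-- The I combinator: `I = S K K`. -/
noncomputable def Ic (arr : A → A → A) : A :=
  ap arr (ap arr (sC arr) (kC arr)) (kC arr)

theorem Ic_le (hA : IsArrow arr) (x : A) : Ic arr ≤ arr x x := by
  have h1 : ap arr (sC arr) (kC arr) ≤ arr (arr x (arr x x)) (arr x x) := by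
    refine ap_le ?_ (mem_Im arr _ _)
    exact le_trans (sC_le x (arr x x) x) (hA.mono (kC_le x (arr x x)) le_rfl)
  refine ap_le ?_ (mem_Im arr _ _)
  exact le_trans h1 (hA.mono (kC_le x x) le_rfl)

theorem Ic_mem (hS : IsSeparator arr S) : Ic arr ∈ S :=
  ap_mem hS (ap_mem hS hS.smem hS.kmem) hS.kmem

/-- Lifting an entailment under an antecedent. -/
noncomputable def lft (arr : A → A → A) (t : A) : A := ap arr (Bc arr) t

theorem lft_le (hA : IsArrow arr) {t y z : A} (ht : t ≤ arr y z) (x : A) :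
    lft arr t ≤ arr (arr x y) (arr x z) :=
  ap_le (le_trans (Bc_le hA x y z) (hA.mono ht le_rfl)) (mem_Im arr _ _)

theorem lft_mem (hS : IsSeparator arr S) {t : A} (ht : t ∈ S) : lft arr t ∈ S :=
  ap_mem hS (Bc_mem hS) ht

/-- Composition of entailments: `cmp s t` realizes `x ⊢ z` when `s : x ⊢ y`, `t : y ⊢ z`. -/
noncomputable def cmp (arr : A → A → A) (s t : A) : A := ap arr (lft arr t) s

theorem cmp_le (hA : IsArrow arr) {s t x y z : A} (hs : s ≤ arr x y) (ht : t ≤ arr y z) :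
    cmp arr s t ≤ arr x z :=
  ap_le (le_trans (lft_le hA ht x) (hA.mono hs le_rfl)) (mem_Im arr _ _)

theorem cmp_mem (hS : IsSeparator arr S) {s t : A} (hs : s ∈ S) (ht : t ∈ S) :
    cmp arr s t ∈ S :=
  ap_mem hS (lft_mem hS ht) hs

/-- The C (flip) combinator: `C = S (B B S) (K K)`. -/
noncomputable def Cc (arr : A → A → A) : A :=
  ap arr (ap arr (sC arr) (cmp arr (sC arr) (Bc arr))) (ap arr (kC arr) (kC arr))

theorem Cc_le (hA : IsArrow arr) (p q r : A) :
    Cc arr ≤ arr (arr p (arr q r)) (arr q (arr p r)) := by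
  have hT2 : ap arr (kC arr) (kC arr) ≤ arr (arr p (arr q r)) (arr q (arr p q)) := by
    refine ap_le ?_ (mem_Im arr _ _)
    exact le_trans (kC_le (arr q (arr p q)) (arr p (arr q r)))
      (hA.mono (kC_le q p) le_rfl)
  have hT1 : cmp arr (sC arr) (Bc arr) ≤
      arr (arr p (arr q r)) (arr (arr q (arr p q)) (arr q (arr p r))) :=
    cmp_le hA (sC_le p q r) (Bc_le hA q (arr p q) (arr p r))
  have h3 : ap arr (sC arr) (cmp arr (sC arr) (Bc arr)) ≤
      arr (arr (arr p (arr q r)) (arr q (arr p q)))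
        (arr (arr p (arr q r)) (arr q (arr p r))) := by
    refine ap_le ?_ (mem_Im arr _ _)
    exact le_trans (sC_le (arr p (arr q r)) (arr q (arr p q)) (arr q (arr p r)))
      (hA.mono hT1 le_rfl)
  refine ap_le ?_ (mem_Im arr _ _)
  exact le_trans h3 (hA.mono hT2 le_rfl)

theorem Cc_mem (hS : IsSeparator arr S) : Cc arr ∈ S :=
  ap_mem hS (ap_mem hS hS.smem (cmp_mem hS hS.smem (Bc_mem hS)))
    (ap_mem hS hS.kmem hS.kmem)

/-- Flip. -/
noncomputable def flp (arr : A → A → A) (t : A) : A := ap arr (Cc arr) t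

theorem flp_le (hA : IsArrow arr) {t p q r : A} (ht : t ≤ arr p (arr q r)) :
    flp arr t ≤ arr q (arr p r) :=
  ap_le (le_trans (Cc_le hA p q r) (hA.mono ht le_rfl)) (mem_Im arr _ _)

theorem flp_mem (hS : IsSeparator arr S) {t : A} (ht : t ∈ S) : flp arr t ∈ S :=
  ap_mem hS (Cc_mem hS) ht

/-- j-elimination on arrows of the form `u → j v`:
realizes `j (u → j v) ⊢ (u → j v)`. -/
noncomputable def jE (arr : A → A → A) (j : A → A) : A :=
  flp arr (cmp arr (flp arr (Ic arr))
    (⨅ (a : A) (b : A), arr (arr a (j b)) (arr (j a) (j b))))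

theorem jE_le (hA : IsArrow arr) (u v : A) :
    jE arr j ≤ arr (j (arr u (j v))) (arr u (j v)) := by
  have f1 : flp arr (Ic arr) ≤ arr u (arr (arr u (j v)) (j v)) :=
    flp_le hA (Ic_le hA (arr u (j v)))
  have f2 : (⨅ (a : A) (b : A), arr (arr a (j b)) (arr (j a) (j b))) ≤
      arr (arr (arr u (j v)) (j v)) (arr (j (arr u (j v))) (j v)) :=
    iInf_le_of_le (arr u (j v)) (iInf_le _ v)
  exact flp_le hA (cmp_le hA f1 f2)

theorem jE_mem (hS : IsSeparator arr S) (hj : IsNucleus arr S j) : jE arr j ∈ S :=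
  flp_mem hS (cmp_mem hS (flp_mem hS (Ic_mem hS)) hj.h2)

end Stmt6Aux

open Stmt6Aux in
/-- Proposition 3.15: the subalgebra `A_j` induced by a nucleus `j` is again an
arrow algebra, and it is compatible with joins if `A` is. -/
theorem stmt6 {A : Type*} [CompleteLattice A] {arr : A → A → A} {S : Set A} {j : A → A}
    (hA : IsArrow arr) (hS : IsSeparator arr S) (hj : IsNucleus arr S j) :
    IsArrow (fun a b => arr a (j b)) ∧
    IsSeparator (fun a b => arr a (j b)) {a : A | j a ∈ S} ∧
    ((∀ (B : Set A) (a : A), arr (sSup B) a = ⨅ b ∈ B, arr b a) →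
      (∀ (B : Set A) (a : A), arr (sSup B) (j a) = ⨅ b ∈ B, arr b (j a))) := by
  have H1le : ∀ t : A, (⨅ a : A, arr a (j a)) ≤ arr t (j t) := fun t => iInf_le _ t
  have H2le : ∀ a b : A,
      (⨅ (a : A) (b : A), arr (arr a (j b)) (arr (j a) (j b))) ≤
        arr (arr a (j b)) (arr (j a) (j b)) := fun a b => iInf_le_of_le a (iInf_le _ b)
  have jS : ∀ {t : A}, t ∈ S → j t ∈ S := fun {t} ht =>
    hS.mp (hS.up hj.h1 (H1le t)) ht
  refine ⟨⟨fun h h' => hA.mono h (hj.mono h')⟩, ?_, fun H B a => H B (j a)⟩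
  constructor
  · -- upward closed
    exact fun {a b} ha hab => hS.up ha (hj.mono hab)
  · -- modus ponens
    intro a b hab ha
    have s1 : arr (j (arr a (j b))) (arr a (j b)) ∈ S :=
      hS.up (jE_mem hS hj) (jE_le hA a b)
    have s2 : arr a (j b) ∈ S := hS.mp s1 hab
    have s3 : arr (arr a (j b)) (arr (j a) (j b)) ∈ S := hS.up hj.h2 (H2le a b)
    exact hS.mp (hS.mp s3 s2) ha
  · -- k
    have e_le : ∀ a b : A,
        cmp arr (cmp arr (⨅ a : A, arr a (j a)) (kC arr)) (⨅ a : A, arr a (j a)) ≤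
          arr a (j (arr b (j a))) := by
      intro a b
      exact cmp_le hA (cmp_le hA (H1le a) (kC_le (j a) b)) (H1le (arr b (j a)))
    have e_mem : cmp arr (cmp arr (⨅ a : A, arr a (j a)) (kC arr))
        (⨅ a : A, arr a (j a)) ∈ S :=
      cmp_mem hS (cmp_mem hS hj.h1 hS.kmem) hj.h1
    have : kC (fun a b => arr a (j b)) ∈ S := by
      refine hS.up e_mem (le_iInf fun a => le_iInf fun b => ?_)
      exact e_le a b
    exact jS this
  · -- s
    set H1 : A := ⨅ a : A, arr a (j a) with hH1
    set H2 : A := ⨅ (a : A) (b : A), arr (arr a (j b)) (arr (j a) (j b)) with hH2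
    have q1_le : ∀ b c : A, cmp arr (jE arr j) H2 ≤
        arr (j (arr b (j c))) (arr (j b) (j c)) := fun b c =>
      cmp_le hA (jE_le hA b c) (H2le b c)
    have e_le : ∀ a b c : A,
        cmp arr (cmp arr (cmp arr (lft arr (cmp arr (jE arr j) H2)) (sC arr))
          (lft arr H1)) H1 ≤
          arr (arr a (j (arr b (j c))))
            (j (arr (arr a (j b)) (j (arr a (j c))))) := by
      intro a b c
      have hq1' : lft arr (cmp arr (jE arr j) H2) ≤
          arr (arr a (j (arr b (j c)))) (arr a (arr (j b) (j c))) :=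
        lft_le hA (q1_le b c) a
      have hq2 : cmp arr (lft arr (cmp arr (jE arr j) H2)) (sC arr) ≤
          arr (arr a (j (arr b (j c)))) (arr (arr a (j b)) (arr a (j c))) :=
        cmp_le hA hq1' (sC_le a (j b) (j c))
      have hq3 : cmp arr (cmp arr (lft arr (cmp arr (jE arr j) H2)) (sC arr))
          (lft arr H1) ≤
          arr (arr a (j (arr b (j c)))) (arr (arr a (j b)) (j (arr a (j c)))) :=
        cmp_le hA hq2 (lft_le hA (H1le (arr a (j c))) (arr a (j b)))
      exact cmp_le hA hq3 (H1le _)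
    have e_mem : cmp arr (cmp arr (cmp arr (lft arr (cmp arr (jE arr j) H2)) (sC arr))
        (lft arr H1)) H1 ∈ S :=
      cmp_mem hS (cmp_mem hS (cmp_mem hS
        (lft_mem hS (cmp_mem hS (jE_mem hS hj) hj.h2)) hS.smem)
        (lft_mem hS hj.h1)) hj.h1
    have : sC (fun a b => arr a (j b)) ∈ S := by
      refine hS.up e_mem (le_iInf fun a => le_iInf fun b => le_iInf fun c => ?_)
      exact e_le a b c
    exact jS this
  · -- a
    set H1 : A := ⨅ a : A, arr a (j a) with hH1
    have e_le : ∀ (x : A) (B : Set A),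
        (B ⊆ Set.range fun p : A × A => arr p.1 (j p.2)) →
        cmp arr (cmp arr (cmp arr (ap arr (aC arr) (lft arr (jE arr j))) (aC arr))
          (lft arr H1)) H1 ≤
          arr (⨅ b ∈ B, arr x (j b)) (j (arr x (j (sInf B)))) := by
      intro x B hB
      have hr : ∀ b ∈ B, lft arr (jE arr j) ≤
          arr (⨅ b ∈ B, arr x (j b)) (arr x b) := by
        intro b hb
        obtain ⟨⟨p, q⟩, rfl⟩ := hB hb
        have h5 : jE arr j ≤ arr (j (arr p (j q))) (arr p (j q)) := jE_le hA p q
        have h6 : lft arr (jE arr j) ≤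
            arr (arr x (j (arr p (j q)))) (arr x (arr p (j q))) := lft_le hA h5 x
        exact le_trans h6 (hA.mono (iInf_le_of_le (arr p (j q)) (iInf_le _ hb)) le_rfl)
      have hE : (fun b => arr x b) '' B ⊆ Im arr := by
        rintro e ⟨b, _, rfl⟩; exact mem_Im arr _ _
      have hrE : lft arr (jE arr j) ≤
          ⨅ e ∈ (fun b => arr x b) '' B, arr (⨅ b ∈ B, arr x (j b)) e := by
        refine le_iInf₂ ?_
        rintro e ⟨b, hb, rfl⟩
        exact hr b hb
      have hq : ap arr (aC arr) (lft arr (jE arr j)) ≤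
          arr (⨅ b ∈ B, arr x (j b)) (sInf ((fun b => arr x b) '' B)) :=
        ap_le (le_trans (aC_le _ hE) (hA.mono hrE le_rfl)) (mem_Im arr _ _)
      have hsE : sInf ((fun b => arr x b) '' B) = ⨅ b ∈ B, arr x b := sInf_image
      rw [hsE] at hq
      have hB' : B ⊆ Im arr := by
        intro b hb
        obtain ⟨⟨p, q⟩, rfl⟩ := hB hb
        exact mem_Im arr _ _
      have hq2 : cmp arr (ap arr (aC arr) (lft arr (jE arr j))) (aC arr) ≤
          arr (⨅ b ∈ B, arr x (j b)) (arr x (sInf B)) :=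
        cmp_le hA hq (aC_le x hB')
      have hq3 : cmp arr (cmp arr (ap arr (aC arr) (lft arr (jE arr j))) (aC arr))
          (lft arr H1) ≤
          arr (⨅ b ∈ B, arr x (j b)) (arr x (j (sInf B))) :=
        cmp_le hA hq2 (lft_le hA (H1le (sInf B)) x)
      exact cmp_le hA hq3 (H1le _)
    have e_mem : cmp arr (cmp arr (cmp arr (ap arr (aC arr) (lft arr (jE arr j)))
        (aC arr)) (lft arr H1)) H1 ∈ S :=
      cmp_mem hS (cmp_mem hS (cmp_mem hS
        (ap_mem hS hS.amem (lft_mem hS (jE_mem hS hj))) hS.amem)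
        (lft_mem hS hj.h1)) hj.h1
    have : aC (fun a b => arr a (j b)) ∈ S := by
      refine hS.up e_mem (le_iInf fun x => le_iInf fun B => le_iInf fun hB => ?_)
      exact e_le x B hB
    exact jS this
end

section
/- Let A be an arrow algebra with separator S. If a, b ∈ S, then the application a·b ∈ S; that is, separators are closed under application. -/
/-- Application in an arrow structure: `a·b := ⨅ { c → d | a ≼ b → (c → d) }`. -/
def appA {A : Type*} [CompleteLattice A] (arr : A → A → A) (a b : A) : A :=
  sInf {e | ∃ c d : A, e = arr c d ∧ a ≤ arr b (arr c d)}

/-- `∂a := ⊤ → a`. -/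
def pd {A : Type*} [CompleteLattice A] (arr : A → A → A) (a : A) : A := arr ⊤ a

/-- Abstraction in an arrow structure: `λf := ⨅ x, x → ∂(f x)`. -/
def lamA {A : Type*} [CompleteLattice A] (arr : A → A → A) (f : A → A) : A :=
  ⨅ x : A, arr x (pd arr (f x))

/-- Lemma 4.10: separators are closed under application. -/
theorem stmt9 {A : Type*} [CompleteLattice A] {arr : A → A → A} {S : Set A}
    (hA : IsArrow arr) (hS : IsSeparator arr S) {a b : A}
    (ha : a ∈ S) (hb : b ∈ S) :
    appA arr a b ∈ S := by
  set B : Set A := {e | ∃ c d : A, e = arr c d ∧ a ≤ arr b (arr c d)} with hB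
  have hsub : B ⊆ Set.range fun p : A × A => arr p.1 p.2 := by
    rintro e ⟨c, d, rfl, -⟩
    exact ⟨(c, d), rfl⟩
  have h1 : aC arr ≤ arr (⨅ e ∈ B, arr b e) (arr b (sInf B)) := by
    calc aC arr ≤ ⨅ (B' : Set A) (_ : B' ⊆ Set.range fun p : A × A => arr p.1 p.2),
        arr (⨅ e ∈ B', arr b e) (arr b (sInf B')) := iInf_le _ b
      _ ≤ _ := by exact le_trans (iInf_le _ B) (iInf_le _ hsub)
  have h2 : arr (⨅ e ∈ B, arr b e) (arr b (sInf B)) ∈ S := hS.up hS.amem h1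
  have h3 : a ≤ ⨅ e ∈ B, arr b e := by
    refine le_iInf₂ fun e he => ?_
    obtain ⟨c, d, rfl, hle⟩ := he
    exact hle
  have h4 : (⨅ e ∈ B, arr b e) ∈ S := hS.up ha h3
  exact hS.mp (hS.mp h2 h4) hb
end

section
/- Let A be an arrow algebra with separator S. Then η := ⨅_{a ∈ A} a → (⨅_{b ∈ A} b → a·b) belongs to S. -/
/-- Lemma 4.11: `η := ⨅ a, a → ⨅ b, b → a·b` belongs to any separator. -/
theorem stmt10 {A : Type*} [CompleteLattice A] {arr : A → A → A} {S : Set A}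
    (hA : IsArrow arr) (hS : IsSeparator arr S) :
    (⨅ a : A, arr a (⨅ b : A, arr b (appA arr a b))) ∈ S := by
  have step1 : ∀ a b : A, aC arr ≤ arr a (arr b (appA arr a b)) := by
    intro a b
    have hBr : {e | ∃ c d : A, e = arr c d ∧ a ≤ arr b (arr c d)} ⊆
        Set.range fun p : A × A => arr p.1 p.2 := by
      rintro e ⟨c, d, rfl, -⟩; exact ⟨(c, d), rfl⟩
    have h1 : aC arr ≤
        arr (⨅ e ∈ {e | ∃ c d : A, e = arr c d ∧ a ≤ arr b (arr c d)}, arr b e)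
          (arr b (appA arr a b)) :=
      le_trans (iInf_le _ b) (le_trans (iInf_le _ _) (iInf_le _ hBr))
    have h2 : a ≤ ⨅ e ∈ {e | ∃ c d : A, e = arr c d ∧ a ≤ arr b (arr c d)}, arr b e := by
      refine le_iInf₂ fun e he => ?_
      obtain ⟨c, d, rfl, h⟩ := he
      exact h
    exact h1.trans (hA.mono h2 le_rfl)
  have step2 : ∀ a : A, aC arr ≤ arr (aC arr) (arr a (⨅ b, arr b (appA arr a b))) := by
    intro a
    have hBr : Set.range (fun b => arr b (appA arr a b)) ⊆
        Set.range fun p : A × A => arr p.1 p.2 := by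
      rintro e ⟨b, rfl⟩; exact ⟨(b, appA arr a b), rfl⟩
    have h1 : aC arr ≤
        arr (⨅ e ∈ Set.range (fun b => arr b (appA arr a b)), arr a e)
          (arr a (sInf (Set.range fun b => arr b (appA arr a b)))) :=
      le_trans (iInf_le _ a) (le_trans (iInf_le _ _) (iInf_le _ hBr))
    have h2 : aC arr ≤ ⨅ e ∈ Set.range (fun b => arr b (appA arr a b)), arr a e := by
      refine le_iInf₂ fun e he => ?_
      obtain ⟨b, rfl⟩ := he
      exact step1 a b
    have h3 : sInf (Set.range fun b => arr b (appA arr a b)) =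
        ⨅ b, arr b (appA arr a b) := sInf_range
    exact h1.trans (hA.mono h2 (le_of_eq (by rw [h3])))
  have hBr : Set.range (fun a => arr a (⨅ b, arr b (appA arr a b))) ⊆
      Set.range fun p : A × A => arr p.1 p.2 := by
    rintro e ⟨a, rfl⟩; exact ⟨(a, _), rfl⟩
  have h1 : aC arr ≤
      arr (⨅ e ∈ Set.range (fun a => arr a (⨅ b, arr b (appA arr a b))), arr (aC arr) e)
        (arr (aC arr) (sInf (Set.range fun a => arr a (⨅ b, arr b (appA arr a b))))) :=
    le_trans (iInf_le _ (aC arr)) (le_trans (iInf_le _ _) (iInf_le _ hBr))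
  have h2 : aC arr ≤
      ⨅ e ∈ Set.range (fun a => arr a (⨅ b, arr b (appA arr a b))), arr (aC arr) e := by
    refine le_iInf₂ fun e he => ?_
    obtain ⟨a, rfl⟩ := he
    exact step2 a
  have h3 : sInf (Set.range fun a => arr a (⨅ b, arr b (appA arr a b))) =
      ⨅ a, arr a (⨅ b, arr b (appA arr a b)) := sInf_range
  have hinst : arr (⨅ e ∈ Set.range (fun a => arr a (⨅ b, arr b (appA arr a b))), arr (aC arr) e)
      (arr (aC arr) (⨅ a, arr a (⨅ b, arr b (appA arr a b)))) ∈ S :=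
    hS.up hS.amem (h1.trans (hA.mono le_rfl (le_of_eq (by rw [h3]))))
  have hP : (⨅ e ∈ Set.range (fun a => arr a (⨅ b, arr b (appA arr a b))), arr (aC arr) e) ∈ S :=
    hS.up hS.amem h2
  exact hS.mp (hS.mp hinst hP) hS.amem
end

section
/- Let A be an arrow algebra with separator S. Define 𝐢' := ⨅_{a ∈ A} a → ∂a, 𝐤' := ⨅_{a ∈ A} a → (⨅_{b ∈ A} b → ∂a), and 𝐬' := ⨅_{a ∈ A} a → (⨅_{b ∈ A} b → ⨅{ c → ∂d | there exist e, f ∈ A with a·c ≼ ∂e, b·c ≼ ∂f and e·f ≼ d }). Then 𝐢', 𝐤', 𝐬' ∈ S. -/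
section Aux

variable {A : Type*} [CompleteLattice A] {arr : A → A → A} {S : Set A}

private lemma kle (a b : A) : kC arr ≤ arr a (arr b a) :=
  (iInf_le _ a).trans (iInf_le _ b)

private lemma sle (a b c : A) :
    sC arr ≤ arr (arr a (arr b c)) (arr (arr a b) (arr a c)) :=
  (iInf_le _ a).trans ((iInf_le _ b).trans (iInf_le _ c))

private lemma ale (x : A) {B : Set A}
    (hB : B ⊆ Set.range fun p : A × A => arr p.1 p.2) :
    aC arr ≤ arr (⨅ b ∈ B, arr x b) (arr x (sInf B)) :=
  (iInf_le _ x).trans ((iInf_le _ B).trans (iInf_le _ hB))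

/-- `𝐚 ≤ x → (y → x·y)`. -/
private lemma e0le (hA : IsArrow arr) (x y : A) :
    aC arr ≤ arr x (arr y (appA arr x y)) := by
  have hB : {e | ∃ c d : A, e = arr c d ∧ x ≤ arr y (arr c d)} ⊆
      Set.range fun p : A × A => arr p.1 p.2 := by
    rintro w ⟨c, d, rfl, -⟩; exact ⟨(c, d), rfl⟩
  refine (ale y hB).trans (hA.mono ?_ le_rfl)
  refine le_iInf₂ fun w hw => ?_
  obtain ⟨c, d, rfl, h⟩ := hw; exact h

/-- Uniform application rule: if `u ≤ v → (cᵢ → dᵢ)` for all `i`, with `u, v ∈ S`,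
then `⨅ i, cᵢ → dᵢ ∈ S`. -/
private lemma apR (hA : IsArrow arr) (hS : IsSeparator arr S)
    {ι : Sort*} (c d : ι → A) {u v : A} (hu : u ∈ S) (hv : v ∈ S)
    (h : ∀ i, u ≤ arr v (arr (c i) (d i))) :
    (⨅ i, arr (c i) (d i)) ∈ S := by
  have hB : (Set.range fun i => arr (c i) (d i)) ⊆
      Set.range fun p : A × A => arr p.1 p.2 := by
    rintro w ⟨i, rfl⟩; exact ⟨(c i, d i), rfl⟩
  have h1 : aC arr ≤ arr u (arr v (sInf (Set.range fun i => arr (c i) (d i)))) := by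
    refine (ale v hB).trans (hA.mono ?_ le_rfl)
    refine le_iInf₂ fun w hw => ?_
    obtain ⟨i, rfl⟩ := hw; exact h i
  have h3 := hS.mp (hS.mp (hS.up hS.amem h1) hu) hv
  rwa [sInf_range] at h3

/-- Weakening: from `u ≤ qᵢ` (`u ∈ S`) conclude `⨅ i, pᵢ → qᵢ ∈ S`. -/
private lemma kR (hA : IsArrow arr) (hS : IsSeparator arr S)
    {ι : Sort*} (p q : ι → A) {u : A} (hu : u ∈ S)
    (h : ∀ i, u ≤ q i) : (⨅ i, arr (p i) (q i)) ∈ S :=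
  apR hA hS p q hS.kmem hu fun i => (kle (q i) (p i)).trans (hA.mono (h i) le_rfl)

/-- Application under one context. -/
private lemma sR (hA : IsArrow arr) (hS : IsSeparator arr S)
    {ι : Sort*} (p q r : ι → A) {u v : A} (hu : u ∈ S) (hv : v ∈ S)
    (h1 : ∀ i, u ≤ arr (p i) (arr (q i) (r i)))
    (h2 : ∀ i, v ≤ arr (p i) (q i)) :
    (⨅ i, arr (p i) (r i)) ∈ S := by
  have hV : (⨅ i, arr (arr (p i) (q i)) (arr (p i) (r i))) ∈ S := by
    refine apR hA hS _ _ hS.smem hu fun i => ?_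
    exact (sle (p i) (q i) (r i)).trans (hA.mono (h1 i) le_rfl)
  refine apR hA hS p r hV hv fun i => ?_
  exact (iInf_le _ i).trans (hA.mono (h2 i) le_rfl)

/-- Composition: from `u ≤ pᵢ → qᵢ` and `v ≤ qᵢ → rᵢ` conclude `⨅ i, pᵢ → rᵢ ∈ S`. -/
private lemma compR (hA : IsArrow arr) (hS : IsSeparator arr S)
    {ι : Sort*} (p q r : ι → A) {u v : A} (hu : u ∈ S) (hv : v ∈ S)
    (h1 : ∀ i, u ≤ arr (p i) (q i))
    (h2 : ∀ i, v ≤ arr (q i) (r i)) :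
    (⨅ i, arr (p i) (r i)) ∈ S := by
  have hW : (⨅ i, arr (p i) (arr (q i) (r i))) ∈ S := by
    refine apR hA hS _ _ hS.kmem hv fun i => ?_
    exact (kle (arr (q i) (r i)) (p i)).trans (hA.mono (h2 i) le_rfl)
  exact sR hA hS p q r hW hu (fun i => iInf_le _ i) h1

/-- Application under two contexts. -/
private lemma sR2 (hA : IsArrow arr) (hS : IsSeparator arr S)
    {ι : Sort*} (p q r s : ι → A) {u v : A} (hu : u ∈ S) (hv : v ∈ S)
    (h1 : ∀ i, u ≤ arr (p i) (arr (q i) (arr (r i) (s i))))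
    (h2 : ∀ i, v ≤ arr (p i) (arr (q i) (r i))) :
    (⨅ i, arr (p i) (arr (q i) (s i))) ∈ S := by
  have hW : (⨅ i, arr (p i) (arr (arr (q i) (r i)) (arr (q i) (s i)))) ∈ S := by
    refine compR hA hS p (fun i => arr (q i) (arr (r i) (s i)))
      (fun i => arr (arr (q i) (r i)) (arr (q i) (s i))) hu hS.smem h1 fun i => ?_
    exact sle (q i) (r i) (s i)
  exact sR hA hS p (fun i => arr (q i) (r i)) (fun i => arr (q i) (s i)) hW hv
    (fun i => iInf_le _ i) h2

/-- Composition with a closed term under two contexts. -/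
private lemma comp2R (hA : IsArrow arr) (hS : IsSeparator arr S)
    {ι : Sort*} (p q x y : ι → A) {u w : A} (hu : u ∈ S) (hw : w ∈ S)
    (h1 : ∀ i, u ≤ arr (p i) (arr (q i) (x i)))
    (h2 : ∀ i, w ≤ arr (x i) (y i)) :
    (⨅ i, arr (p i) (arr (q i) (y i))) ∈ S := by
  have hW1 : (⨅ i, arr (q i) (arr (x i) (y i))) ∈ S := kR hA hS _ _ hw h2
  have hW2 : (⨅ i, arr (p i) (arr (q i) (arr (x i) (y i)))) ∈ S :=
    kR hA hS _ _ hW1 fun i => iInf_le _ i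
  exact sR2 hA hS p q x y hW2 hu (fun i => iInf_le _ i) h1

/-- Application under three contexts. -/
private lemma sR3 (hA : IsArrow arr) (hS : IsSeparator arr S)
    {ι : Sort*} (p q r s t : ι → A) {u v : A} (hu : u ∈ S) (hv : v ∈ S)
    (h1 : ∀ i, u ≤ arr (p i) (arr (q i) (arr (r i) (arr (s i) (t i)))))
    (h2 : ∀ i, v ≤ arr (p i) (arr (q i) (arr (r i) (s i)))) :
    (⨅ i, arr (p i) (arr (q i) (arr (r i) (t i)))) ∈ S := by
  have hW : (⨅ i, arr (p i) (arr (q i) (arr (arr (r i) (s i)) (arr (r i) (t i))))) ∈ S := by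
    refine comp2R hA hS p q (fun i => arr (r i) (arr (s i) (t i)))
      (fun i => arr (arr (r i) (s i)) (arr (r i) (t i))) hu hS.smem h1 fun i => ?_
    exact sle (r i) (s i) (t i)
  exact sR2 hA hS p q (fun i => arr (r i) (s i)) (fun i => arr (r i) (t i)) hW hv
    (fun i => iInf_le _ i) h2

/-- Infimum introduction under one context (via 𝐚). -/
private lemma infR (hA : IsArrow arr) (hS : IsSeparator arr S)
    {ι : Sort*} (g : ι → A) (T : ι → Set A)
    (hT : ∀ i, T i ⊆ Set.range fun p : A × A => arr p.1 p.2)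
    {u : A} (hu : u ∈ S)
    (h : ∀ i, ∀ w ∈ T i, u ≤ arr (g i) w) :
    (⨅ i, arr (g i) (sInf (T i))) ∈ S := by
  refine apR hA hS g (fun i => sInf (T i)) hS.amem hu fun i => ?_
  exact (ale (g i) (hT i)).trans (hA.mono (le_iInf₂ (h i)) le_rfl)

end Aux

/-- Index type for the 𝐬' derivation. -/
private structure Idx6 {A : Type*} [CompleteLattice A] (arr : A → A → A) : Type _ where
  a : A
  b : A
  c : A
  d : A
  e : A
  f : A
  h1 : appA arr a c ≤ pd arr e
  h2 : appA arr b c ≤ pd arr f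
  h3 : appA arr e f ≤ d

/-- Lemma 4.12: the auxiliary combinators 𝐢', 𝐤' and 𝐬' belong to any separator. -/
theorem stmt11 {A : Type*} [CompleteLattice A] {arr : A → A → A} {S : Set A}
    (hA : IsArrow arr) (hS : IsSeparator arr S) :
    (⨅ a : A, arr a (pd arr a)) ∈ S ∧
    (⨅ a : A, arr a (⨅ b : A, arr b (pd arr a))) ∈ S ∧
    (⨅ a : A, arr a (⨅ b : A, arr b (sInf {w : A | ∃ c d : A, w = arr c (pd arr d) ∧
      ∃ e f : A, appA arr a c ≤ pd arr e ∧ appA arr b c ≤ pd arr f ∧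
        appA arr e f ≤ d}))) ∈ S := by
  -- 𝐢'
  have hi : (⨅ a : A, arr a (pd arr a)) ∈ S :=
    hS.up hS.kmem (le_iInf fun a => kle a ⊤)
  refine ⟨hi, ?_, ?_⟩
  -- 𝐤'
  · have hK : (⨅ a : A, arr a (pd arr (pd arr a))) ∈ S := by
      refine compR hA hS (fun a : A => a) (fun a => pd arr a) (fun a => pd arr (pd arr a))
        hi hi (fun a => iInf_le _ a) (fun a => iInf_le _ (pd arr a))
    refine hS.up hK (le_iInf fun a => (iInf_le _ a).trans (hA.mono le_rfl ?_))
    exact le_iInf fun b => hA.mono le_top le_rfl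
  -- 𝐬'
  · set T : A → A → Set A := fun a b =>
      {w : A | ∃ c d : A, w = arr c (pd arr d) ∧
        ∃ e f : A, appA arr a c ≤ pd arr e ∧ appA arr b c ≤ pd arr f ∧
          appA arr e f ≤ d} with hTdef
    have hTr : ∀ a b, T a b ⊆ Set.range fun p : A × A => arr p.1 p.2 := by
      rintro a b w ⟨c, d, rfl, -⟩; exact ⟨(c, pd arr d), rfl⟩
    -- ∂-modus ponens: ⨅ (e,f), ∂e → (∂f → ∂(e·f)) ∈ S
    have hMPd : (⨅ ef : A × A,
        arr (pd arr ef.1) (arr (pd arr ef.2) (pd arr (appA arr ef.1 ef.2)))) ∈ S := by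
      have hpdA : pd arr (aC arr) ∈ S :=
        hS.mp (hS.up hi (iInf_le _ (aC arr))) hS.amem
      have hG1 : (⨅ ef : A × A,
          arr (pd arr ef.1) (pd arr (arr ef.2 (appA arr ef.1 ef.2)))) ∈ S := by
        refine apR hA hS _ _ hS.smem hpdA fun ef => ?_
        refine (sle ⊤ ef.1 (arr ef.2 (appA arr ef.1 ef.2))).trans (hA.mono ?_ le_rfl)
        exact hA.mono le_rfl (e0le hA ef.1 ef.2)
      refine compR hA hS (fun ef : A × A => pd arr ef.1)
        (fun ef => pd arr (arr ef.2 (appA arr ef.1 ef.2)))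
        (fun ef => arr (pd arr ef.2) (pd arr (appA arr ef.1 ef.2)))
        hG1 hS.smem (fun ef => iInf_le _ ef) fun ef => ?_
      exact sle ⊤ ef.2 (appA arr ef.1 ef.2)
    -- Step A: the fully-indexed core derivation
    have hXac : (⨅ i : Idx6 arr, arr i.a (arr i.b (arr i.c (pd arr i.e)))) ∈ S := by
      refine compR hA hS (fun i : Idx6 arr => i.a)
        (fun i => arr i.c (pd arr i.e))
        (fun i => arr i.b (arr i.c (pd arr i.e)))
        hS.amem hS.kmem (fun i => ?_) (fun i => kle (arr i.c (pd arr i.e)) i.b)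
      exact (e0le hA i.a i.c).trans (hA.mono le_rfl (hA.mono le_rfl i.h1))
    have hXbc : (⨅ i : Idx6 arr, arr i.a (arr i.b (arr i.c (pd arr i.f)))) ∈ S := by
      refine kR hA hS (fun i : Idx6 arr => i.a)
        (fun i => arr i.b (arr i.c (pd arr i.f))) hS.amem fun i => ?_
      exact (e0le hA i.b i.c).trans (hA.mono le_rfl (hA.mono le_rfl i.h2))
    have hMPd' : ∀ i : Idx6 arr, (⨅ ef : A × A,
        arr (pd arr ef.1) (arr (pd arr ef.2) (pd arr (appA arr ef.1 ef.2)))) ≤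
        arr (pd arr i.e) (arr (pd arr i.f) (pd arr i.d)) := fun i =>
      (iInf_le _ (i.e, i.f)).trans
        (hA.mono le_rfl (hA.mono le_rfl (hA.mono le_rfl i.h3)))
    have hY1 : (⨅ i : Idx6 arr,
        arr i.c (arr (pd arr i.e) (arr (pd arr i.f) (pd arr i.d)))) ∈ S :=
      kR hA hS _ _ hMPd hMPd'
    have hY2 : (⨅ i : Idx6 arr,
        arr i.b (arr i.c (arr (pd arr i.e) (arr (pd arr i.f) (pd arr i.d))))) ∈ S :=
      kR hA hS _ _ hY1 fun i => iInf_le _ i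
    have hY3 : (⨅ i : Idx6 arr,
        arr i.a (arr i.b (arr i.c
          (arr (pd arr i.e) (arr (pd arr i.f) (pd arr i.d)))))) ∈ S :=
      kR hA hS _ _ hY2 fun i => iInf_le _ i
    have hZ : (⨅ i : Idx6 arr,
        arr i.a (arr i.b (arr i.c (arr (pd arr i.f) (pd arr i.d))))) ∈ S :=
      sR3 hA hS (fun i : Idx6 arr => i.a) (fun i => i.b) (fun i => i.c)
        (fun i => pd arr i.e) (fun i => arr (pd arr i.f) (pd arr i.d))
        hY3 hXac (fun i => iInf_le _ i) (fun i => iInf_le _ i)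
    have hXI : (⨅ i : Idx6 arr,
        arr i.a (arr i.b (arr i.c (pd arr i.d)))) ∈ S :=
      sR3 hA hS (fun i : Idx6 arr => i.a) (fun i => i.b) (fun i => i.c)
        (fun i => pd arr i.f) (fun i => pd arr i.d)
        hZ hXbc (fun i => iInf_le _ i) (fun i => iInf_le _ i)
    -- Step B: collapse the innermost infimum
    have hX1 : (⨅ ab : A × A, arr ab.1 (sInf (arr ab.2 '' T ab.1 ab.2))) ∈ S := by
      refine infR hA hS (fun ab : A × A => ab.1) (fun ab => arr ab.2 '' T ab.1 ab.2)
        (fun ab => ?_) hXI (fun ab w hw => ?_)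
      · rintro w ⟨v, -, rfl⟩; exact ⟨(ab.2, v), rfl⟩
      · obtain ⟨v, hv, rfl⟩ := hw
        obtain ⟨c, d, rfl, e, f, h1, h2, h3⟩ := hv
        exact iInf_le (fun i : Idx6 arr => arr i.a (arr i.b (arr i.c (pd arr i.d))))
          ⟨ab.1, ab.2, c, d, e, f, h1, h2, h3⟩
    -- Step C: move the b-context inside
    have hX2 : (⨅ ab : A × A, arr ab.1 (arr ab.2 (sInf (T ab.1 ab.2)))) ∈ S := by
      refine compR hA hS (fun ab : A × A => ab.1)
        (fun ab => ⨅ w ∈ T ab.1 ab.2, arr ab.2 w)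
        (fun ab => arr ab.2 (sInf (T ab.1 ab.2)))
        hX1 hS.amem (fun ab => ?_) (fun ab => ale ab.2 (hTr ab.1 ab.2))
      refine (iInf_le _ ab).trans (hA.mono le_rfl ?_)
      rw [sInf_image]
    -- Step D: abstract over a
    have hX3 : (⨅ a : A, arr a
        (sInf (Set.range fun b : A => arr b (sInf (T a b))))) ∈ S := by
      refine infR hA hS (fun a : A => a)
        (fun a => Set.range fun b : A => arr b (sInf (T a b)))
        (fun a => ?_) hX2 (fun a w hw => ?_)
      · rintro w ⟨b, rfl⟩; exact ⟨(b, sInf (T a b)), rfl⟩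
      · obtain ⟨b, rfl⟩ := hw
        exact iInf_le (fun ab : A × A => arr ab.1 (arr ab.2 (sInf (T ab.1 ab.2)))) (a, b)
    refine hS.up hX3 (le_iInf fun a => (iInf_le _ a).trans (hA.mono le_rfl ?_))
    rw [sInf_range]
end

section
/- Let j be a nucleus on an arrow algebra A with separator S, and let a × b := ⨅_{z ∈ A} z → ∂( z·(∂a)·(∂b) ). Then: (iv) ⨅_{a,b ∈ A} j(a × b) → (j(a) × j(b)) ∈ S and ⨅_{a,b ∈ A} (j(a) × j(b)) → j(a × b) ∈ S; (v) j(⨅_{x ∈ X} x) ≼ ⨅_{x ∈ X} j(x) for any subset X ⊆ A. -/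
/-- The logical preorder: `a ⊢ b` iff `a → b ∈ S`. -/
def entails {A : Type*} [CompleteLattice A] (arr : A → A → A) (S : Set A) (a b : A) : Prop :=
  arr a b ∈ S

/-- The logical conjunction: `a × b := ⨅ z, z → ∂(z·(∂a)·(∂b))`. -/
def meetA {A : Type*} [CompleteLattice A] (arr : A → A → A) (a b : A) : A :=
  ⨅ z : A, arr z (pd arr (appA arr (appA arr z (pd arr a)) (pd arr b)))

section ArrowLib

variable {A : Type*} [CompleteLattice A] {arr : A → A → A} {S : Set A} {j : A → A}

/-- Uniform entailment: `f i ⊢ g i` with a single realizer. -/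
abbrev U (arr : A → A → A) (S : Set A) {ι : Type*} (f g : ι → A) : Prop :=
  (⨅ i, arr (f i) (g i)) ∈ S

lemma aC_le_iInf (x : A) {ι : Type*} (c : ι → A) (hc : ∀ i, ∃ u v, c i = arr u v) :
    aC arr ≤ arr (⨅ i, arr x (c i)) (arr x (⨅ i, c i)) := by
  have h : aC arr ≤ arr (⨅ b ∈ Set.range c, arr x b) (arr x (sInf (Set.range c))) := by
    refine iInf_le_of_le x (iInf_le_of_le (Set.range c) (iInf_le _ ?_))
    rintro e ⟨i, rfl⟩
    obtain ⟨u, v, huv⟩ := hc i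
    exact ⟨(u, v), huv.symm⟩
  rwa [iInf_range, sInf_range] at h

lemma umpr (hA : IsArrow arr) (hS : IsSeparator arr S) {ι : Type*} {x y : ι → A}
    (hy : ∀ i, ∃ u v, y i = arr u v)
    (h1 : (⨅ i, arr (x i) (y i)) ∈ S) (h2 : (⨅ i, x i) ∈ S) : (⨅ i, y i) ∈ S := by
  have m1 : (⨅ i, arr (⨅ k, x k) (y i)) ∈ S :=
    hS.up h1 (le_iInf fun i => (iInf_le _ i).trans (hA.mono (iInf_le x i) le_rfl))
  have m2 : arr (⨅ k, x k) (⨅ i, y i) ∈ S :=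
    hS.mp (hS.up hS.amem (aC_le_iInf (⨅ k, x k) y hy)) m1
  exact hS.mp m2 h2

lemma uI (hA : IsArrow arr) (hS : IsSeparator arr S) : (⨅ a : A, arr a a) ∈ S := by
  have h1 : (⨅ a : A, arr (arr a (arr a a)) (arr a a)) ∈ S := by
    refine umpr hA hS (x := fun a : A => arr a (arr (arr a a) a))
      (fun a => ⟨_, _, rfl⟩) ?_ ?_
    · exact hS.up hS.smem (le_iInf fun a =>
        iInf_le_of_le a (iInf_le_of_le (arr a a) (iInf_le _ a)))
    · exact hS.up hS.kmem (le_iInf fun a => iInf_le_of_le a (iInf_le _ (arr a a)))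
  refine umpr hA hS (x := fun a : A => arr a (arr a a)) (fun a => ⟨_, _, rfl⟩) h1 ?_
  exact hS.up hS.kmem (le_iInf fun a => iInf_le_of_le a (iInf_le _ a))

lemma urefl (hA : IsArrow arr) (hS : IsSeparator arr S) {ι : Type*} (f : ι → A) :
    U arr S f f :=
  hS.up (uI hA hS) (le_iInf fun i => iInf_le _ (f i))

lemma ule (hA : IsArrow arr) (hS : IsSeparator arr S) {ι : Type*} {f g : ι → A}
    (h : ∀ i, f i ≤ g i) : U arr S f g :=
  hS.up (uI hA hS) (le_iInf fun i => (iInf_le _ (f i)).trans (hA.mono le_rfl (h i)))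

lemma uk (hS : IsSeparator arr S) {ι : Type*} (f g : ι → A) :
    U arr S f (fun i => arr (g i) (f i)) :=
  hS.up hS.kmem (le_iInf fun i => iInf_le_of_le (f i) (iInf_le _ (g i)))

lemma us (hS : IsSeparator arr S) {ι : Type*} (f g h : ι → A) :
    U arr S (fun i => arr (f i) (arr (g i) (h i)))
      (fun i => arr (arr (f i) (g i)) (arr (f i) (h i))) :=
  hS.up hS.smem (le_iInf fun i =>
    iInf_le_of_le (f i) (iInf_le_of_le (g i) (iInf_le _ (h i))))

lemma uconst (hA : IsArrow arr) (hS : IsSeparator arr S) {ι : Type*} {f h : ι → A}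
    (hh : (⨅ i, h i) ∈ S) : U arr S f h :=
  umpr hA hS (fun i => ⟨_, _, rfl⟩) (uk hS h f) hh

lemma uapp (hA : IsArrow arr) (hS : IsSeparator arr S) {ι : Type*} {f g h : ι → A}
    (h1 : U arr S f (fun i => arr (g i) (h i))) (h2 : U arr S f g) : U arr S f h := by
  have m : (⨅ i, arr (arr (f i) (g i)) (arr (f i) (h i))) ∈ S :=
    umpr hA hS (fun i => ⟨_, _, rfl⟩) (us hS f g h) h1
  exact umpr hA hS (fun i => ⟨_, _, rfl⟩) m h2

lemma utrans (hA : IsArrow arr) (hS : IsSeparator arr S) {ι : Type*} {f g h : ι → A}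
    (h1 : U arr S f g) (h2 : U arr S g h) : U arr S f h :=
  uapp hA hS (uconst hA hS h2) h1

lemma uBint (hA : IsArrow arr) (hS : IsSeparator arr S) {ι : Type*} (f g h : ι → A) :
    U arr S (fun i => arr (g i) (h i))
      (fun i => arr (arr (f i) (g i)) (arr (f i) (h i))) :=
  utrans hA hS (uk hS _ f) (us hS f g h)

lemma uB (hA : IsArrow arr) (hS : IsSeparator arr S) {ι : Type*} (f : ι → A) {g h : ι → A}
    (hgh : U arr S g h) :
    U arr S (fun i => arr (f i) (g i)) (fun i => arr (f i) (h i)) :=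
  uapp hA hS (utrans hA hS (uconst hA hS hgh) (uBint hA hS f g h)) (urefl hA hS _)

lemma uctxB (hA : IsArrow arr) (hS : IsSeparator arr S) {ι : Type*} {q α β γ : ι → A}
    (h1 : U arr S q (fun i => arr (α i) (β i)))
    (h2 : U arr S q (fun i => arr (β i) (γ i))) :
    U arr S q (fun i => arr (α i) (γ i)) :=
  uapp hA hS (utrans hA hS h2 (uBint hA hS α β γ)) h1

lemma uflip1 (hA : IsArrow arr) (hS : IsSeparator arr S) {ι : Type*} {f g h : ι → A}
    (hh : U arr S f (fun i => arr (g i) (h i))) :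
    U arr S g (fun i => arr (f i) (h i)) :=
  uapp hA hS (utrans hA hS (uconst hA hS hh) (us hS f g h)) (uk hS g f)

lemma uflip2 (hA : IsArrow arr) (hS : IsSeparator arr S) {ι : Type*} {q x y w : ι → A}
    (h : U arr S q (fun i => arr (x i) (arr (y i) (w i)))) :
    U arr S q (fun i => arr (y i) (arr (x i) (w i))) :=
  uctxB hA hS (uconst hA hS (uk hS y x)) (utrans hA hS h (us hS x y w))

end ArrowLib

section ArrowLib2

variable {A : Type*} [CompleteLattice A] {arr : A → A → A} {S : Set A} {j : A → A}

lemma app_le {a b c d : A} (h : a ≤ arr b (arr c d)) : appA arr a b ≤ arr c d :=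
  sInf_le ⟨c, d, rfl, h⟩

lemma le_arr_app (hA : IsArrow arr) (a b : A) :
    aC arr ≤ arr a (arr b (appA arr a b)) := by
  have h1 : aC arr ≤ arr (⨅ e ∈ {e | ∃ c d : A, e = arr c d ∧ a ≤ arr b (arr c d)}, arr b e)
      (arr b (appA arr a b)) := by
    refine iInf_le_of_le b (iInf_le_of_le _ (iInf_le _ ?_))
    rintro e ⟨c, d, rfl, -⟩; exact ⟨(c, d), rfl⟩
  refine h1.trans (hA.mono ?_ le_rfl)
  exact le_iInf₂ fun e he => by obtain ⟨c, d, rfl, hle⟩ := he; exact hle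

lemma u_pd_intro (hS : IsSeparator arr S) {ι : Type*} (f : ι → A) :
    U arr S f (fun i => pd arr (f i)) :=
  hS.up hS.kmem (le_iInf fun i => iInf_le_of_le (f i) (iInf_le _ ⊤))

lemma u_pd_elim (hA : IsArrow arr) (hS : IsSeparator arr S) {ι : Type*} (f : ι → A) :
    U arr S (fun i => pd arr (f i)) f :=
  uapp hA hS (g := fun _ => (⊤ : A)) (urefl hA hS _) (ule hA hS fun _ => le_top)

lemma u_meet_fst (hA : IsArrow arr) (hS : IsSeparator arr S) {ι : Type*} (g h : ι → A) :
    U arr S (fun i => meetA arr (g i) (h i)) g := by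
  have key : ∀ i, meetA arr (g i) (h i) ≤ arr (kC arr) (pd arr (pd arr (g i))) := by
    intro i
    have h1 : kC arr ≤ arr (pd arr (g i)) (arr (pd arr (h i)) (arr ⊤ (g i))) :=
      iInf_le_of_le (pd arr (g i)) (iInf_le _ (pd arr (h i)))
    have h2 : appA arr (kC arr) (pd arr (g i)) ≤ arr (pd arr (h i)) (arr ⊤ (g i)) :=
      app_le h1
    have h3 : appA arr (appA arr (kC arr) (pd arr (g i))) (pd arr (h i)) ≤ arr ⊤ (g i) :=
      app_le h2
    exact (iInf_le _ (kC arr)).trans (hA.mono le_rfl (hA.mono le_rfl h3))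
  have s1 := ule hA hS key
  have s2 : U arr S (fun i => meetA arr (g i) (h i)) (fun _ => kC arr) :=
    uconst hA hS (hS.up hS.kmem (le_iInf fun _ => le_rfl))
  have s3 : U arr S (fun i => meetA arr (g i) (h i)) (fun i => pd arr (pd arr (g i))) :=
    uapp hA hS s1 s2
  exact utrans hA hS (utrans hA hS s3 (u_pd_elim hA hS _)) (u_pd_elim hA hS g)

lemma u_meet_snd (hA : IsArrow arr) (hS : IsSeparator arr S) {ι : Type*} (g h : ι → A) :
    U arr S (fun i => meetA arr (g i) (h i)) h := by
  have hkImem : (⨅ p : A × A, arr p.1 (arr p.2 p.2)) ∈ S :=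
    uconst hA hS (f := fun p : A × A => p.1) (h := fun p : A × A => arr p.2 p.2)
      (hS.up (uI hA hS) (le_iInf fun p => iInf_le _ p.2))
  have key : ∀ i, meetA arr (g i) (h i) ≤
      arr (⨅ p : A × A, arr p.1 (arr p.2 p.2)) (pd arr (pd arr (h i))) := by
    intro i
    have h1 : (⨅ p : A × A, arr p.1 (arr p.2 p.2)) ≤
        arr (pd arr (g i)) (arr (pd arr (h i)) (arr ⊤ (h i))) :=
      iInf_le _ (pd arr (g i), pd arr (h i))
    have h2 : appA arr (⨅ p : A × A, arr p.1 (arr p.2 p.2)) (pd arr (g i)) ≤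
        arr (pd arr (h i)) (arr ⊤ (h i)) := app_le h1
    have h3 : appA arr (appA arr (⨅ p : A × A, arr p.1 (arr p.2 p.2)) (pd arr (g i)))
        (pd arr (h i)) ≤ arr ⊤ (h i) := app_le h2
    exact (iInf_le _ _).trans (hA.mono le_rfl (hA.mono le_rfl h3))
  have s1 := ule hA hS key
  have s2 : U arr S (fun i => meetA arr (g i) (h i))
      (fun _ => ⨅ p : A × A, arr p.1 (arr p.2 p.2)) :=
    uconst hA hS (hS.up hkImem (le_iInf fun _ => le_rfl))
  have s3 : U arr S (fun i => meetA arr (g i) (h i)) (fun i => pd arr (pd arr (h i))) :=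
    uapp hA hS s1 s2
  exact utrans hA hS (utrans hA hS s3 (u_pd_elim hA hS _)) (u_pd_elim hA hS h)

lemma u_meet_pair (hA : IsArrow arr) (hS : IsSeparator arr S) {ι : Type*} {f g h : ι → A}
    (hg : U arr S f g) (hh : U arr S f h) :
    U arr S f (fun i => meetA arr (g i) (h i)) := by
  have a1 : U arr S (fun q : ι × A => q.2) (fun q => arr (f q.1) (pd arr (g q.1))) :=
    uconst hA hS (hS.up (utrans hA hS hg (u_pd_intro hS g)) (le_iInf fun q => iInf_le _ q.1))
  have a2 : U arr S (fun q : ι × A => q.2)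
      (fun q => arr (pd arr (g q.1)) (appA arr q.2 (pd arr (g q.1)))) :=
    hS.up hS.amem (le_iInf fun q => le_arr_app hA _ _)
  have a3 := uctxB hA hS a1 a2
  have a4 : U arr S (fun q : ι × A => q.2)
      (fun q => arr (appA arr q.2 (pd arr (g q.1)))
        (arr (pd arr (h q.1)) (appA arr (appA arr q.2 (pd arr (g q.1))) (pd arr (h q.1))))) :=
    uconst hA hS (hS.up hS.amem (le_iInf fun q => le_arr_app hA _ _))
  have a5 := uctxB hA hS a3 a4
  have a6 : U arr S (fun q : ι × A => q.2) (fun q => arr (f q.1) (pd arr (h q.1))) :=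
    uconst hA hS (hS.up (utrans hA hS hh (u_pd_intro hS h)) (le_iInf fun q => iInf_le _ q.1))
  have a7 : U arr S (fun q : ι × A => q.2)
      (fun q => arr (f q.1) (appA arr (appA arr q.2 (pd arr (g q.1))) (pd arr (h q.1)))) :=
    uapp hA hS (utrans hA hS a5 (us hS _ _ _)) a6
  have a8 : U arr S (fun q : ι × A => q.2)
      (fun q => arr (appA arr (appA arr q.2 (pd arr (g q.1))) (pd arr (h q.1)))
        (pd arr (appA arr (appA arr q.2 (pd arr (g q.1))) (pd arr (h q.1))))) :=
    uconst hA hS (hS.up hS.kmem (le_iInf fun q => iInf_le_of_le _ (iInf_le _ ⊤)))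
  have a9 := uctxB hA hS a7 a8
  have a10 := uflip1 hA hS a9
  -- a10 : ⨅ q : ι × A, arr (f q.1) (arr q.2 (∂(q.2·∂g·∂h))) ∈ S
  have hCinf : (⨅ q : ι × A, arr (f q.1)
      (arr q.2 (pd arr (appA arr (appA arr q.2 (pd arr (g q.1))) (pd arr (h q.1)))))) ∈ S := a10
  have key : ∀ i, aC arr ≤ arr (⨅ q : ι × A, arr (f q.1)
      (arr q.2 (pd arr (appA arr (appA arr q.2 (pd arr (g q.1))) (pd arr (h q.1))))))
      (arr (f i) (meetA arr (g i) (h i))) := by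
    intro i
    have h1 : aC arr ≤ arr (⨅ z : A, arr (f i)
        (arr z (pd arr (appA arr (appA arr z (pd arr (g i))) (pd arr (h i))))))
        (arr (f i) (meetA arr (g i) (h i))) :=
      aC_le_iInf (f i)
        (fun z : A => arr z (pd arr (appA arr (appA arr z (pd arr (g i))) (pd arr (h i)))))
        (fun z => ⟨_, _, rfl⟩)
    refine h1.trans (hA.mono ?_ le_rfl)
    exact le_iInf fun z => iInf_le _ (i, z)
  have m1 : (⨅ i, arr (⨅ q : ι × A, arr (f q.1)
      (arr q.2 (pd arr (appA arr (appA arr q.2 (pd arr (g q.1))) (pd arr (h q.1))))))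
      (arr (f i) (meetA arr (g i) (h i)))) ∈ S :=
    hS.up hS.amem (le_iInf key)
  exact umpr hA hS (fun i => ⟨_, _, rfl⟩) m1 (hS.up hCinf (le_iInf fun _ => le_rfl))

end ArrowLib2

section ArrowLib3

variable {A : Type*} [CompleteLattice A] {arr : A → A → A} {S : Set A} {j : A → A}

lemma u_pair (hA : IsArrow arr) (hS : IsSeparator arr S) :
    U arr S (fun p : A × A => p.1) (fun p => arr p.2 (meetA arr p.1 p.2)) := by
  have b1 : U arr S (fun p : A × A × A => p.2.2) (fun p => arr p.1 (pd arr p.1)) :=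
    uconst hA hS (hS.up hS.kmem (le_iInf fun p => iInf_le_of_le p.1 (iInf_le _ ⊤)))
  have b2 : U arr S (fun p : A × A × A => p.2.2)
      (fun p => arr (pd arr p.1) (appA arr p.2.2 (pd arr p.1))) :=
    hS.up hS.amem (le_iInf fun p => le_arr_app hA _ _)
  have b3 := uctxB hA hS b1 b2
  have b4 : U arr S (fun p : A × A × A => p.2.2)
      (fun p => arr (appA arr p.2.2 (pd arr p.1))
        (arr (pd arr p.2.1) (appA arr (appA arr p.2.2 (pd arr p.1)) (pd arr p.2.1)))) :=
    uconst hA hS (hS.up hS.amem (le_iInf fun p => le_arr_app hA _ _))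
  have b5 := uctxB hA hS b3 b4
  have b6 := uflip2 hA hS b5
  have b7 : U arr S (fun p : A × A × A => p.2.2) (fun p => arr p.2.1 (pd arr p.2.1)) :=
    uconst hA hS (hS.up hS.kmem (le_iInf fun p => iInf_le_of_le p.2.1 (iInf_le _ ⊤)))
  have b8 := uctxB hA hS b7 b6
  have b9 : U arr S (fun p : A × A × A => p.2.2)
      (fun p => arr (arr p.1 (appA arr (appA arr p.2.2 (pd arr p.1)) (pd arr p.2.1)))
        (arr p.1 (pd arr (appA arr (appA arr p.2.2 (pd arr p.1)) (pd arr p.2.1))))) :=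
    uconst hA hS (uB hA hS (fun p : A × A × A => p.1)
      (u_pd_intro hS (fun p : A × A × A =>
        appA arr (appA arr p.2.2 (pd arr p.1)) (pd arr p.2.1))))
  have b10 := uctxB hA hS b8 b9
  have b11 := uflip1 hA hS b10
  have b12 := uflip2 hA hS b11
  have b13 := uflip1 hA hS b12
  -- b13 : ⨅ p : A × A × A, arr p.1 (arr p.2.1 (arr p.2.2 (∂(p.2.2·∂p.1·∂p.2.1)))) ∈ S
  have mX : (⨅ q : A × A, ⨅ z : A, arr q.1 (arr q.2
      (arr z (pd arr (appA arr (appA arr z (pd arr q.1)) (pd arr q.2)))))) ∈ S :=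
    hS.up b13 (le_iInf fun q => le_iInf fun z => iInf_le _ (q.1, q.2, z))
  have d1 : (⨅ q : A × A, arr q.1 (⨅ z : A, arr q.2
      (arr z (pd arr (appA arr (appA arr z (pd arr q.1)) (pd arr q.2)))))) ∈ S := by
    have h1 : (⨅ q : A × A, arr (⨅ z : A, arr q.1 (arr q.2
        (arr z (pd arr (appA arr (appA arr z (pd arr q.1)) (pd arr q.2))))))
        (arr q.1 (⨅ z : A, arr q.2
        (arr z (pd arr (appA arr (appA arr z (pd arr q.1)) (pd arr q.2))))))) ∈ S :=
      hS.up hS.amem (le_iInf fun q => aC_le_iInf q.1 _ (fun z => ⟨_, _, rfl⟩))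
    exact umpr hA hS (fun q => ⟨_, _, rfl⟩) h1 mX
  have d3 : U arr S (fun q : A × A => ⨅ z : A, arr q.2
      (arr z (pd arr (appA arr (appA arr z (pd arr q.1)) (pd arr q.2)))))
      (fun q => arr q.2 (meetA arr q.1 q.2)) :=
    hS.up hS.amem (le_iInf fun q => aC_le_iInf q.2
      (fun z : A => arr z (pd arr (appA arr (appA arr z (pd arr q.1)) (pd arr q.2))))
      (fun z => ⟨_, _, rfl⟩))
  exact utrans hA hS d1 d3

lemma uj1 (hS : IsSeparator arr S) (hj : IsNucleus arr S j) {ι : Type*} (f : ι → A) :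
    U arr S f (fun i => j (f i)) :=
  hS.up hj.h1 (le_iInf fun i => iInf_le _ (f i))

lemma uj2 (hS : IsSeparator arr S) (hj : IsNucleus arr S j) {ι : Type*} (f g : ι → A) :
    U arr S (fun i => arr (f i) (j (g i))) (fun i => arr (j (f i)) (j (g i))) :=
  hS.up hj.h2 (le_iInf fun i => iInf_le_of_le (f i) (iInf_le _ (g i)))

lemma ujN2 (hA : IsArrow arr) (hS : IsSeparator arr S) (hj : IsNucleus arr S j)
    {ι : Type*} {f g : ι → A} (h : U arr S f (fun i => j (g i))) :
    U arr S (fun i => j (f i)) (fun i => j (g i)) :=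
  umpr hA hS (fun i => ⟨_, _, rfl⟩) (uj2 hS hj f g) h

end ArrowLib3

/-- Lemma 6.4: nuclei commute with binary meets up to logical equivalence, and
are sub-distributive over infima. -/
theorem stmt17 {A : Type*} [CompleteLattice A] {arr : A → A → A} {S : Set A} {j : A → A}
    (hA : IsArrow arr) (hS : IsSeparator arr S) (hj : IsNucleus arr S j) :
    (⨅ (a : A) (b : A), arr (j (meetA arr a b)) (meetA arr (j a) (j b))) ∈ S ∧
    (⨅ (a : A) (b : A), arr (meetA arr (j a) (j b)) (j (meetA arr a b))) ∈ S ∧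
    (∀ X : Set A, j (⨅ x ∈ X, x) ≤ ⨅ x ∈ X, j x) := by
  refine ⟨?_, ?_, ?_⟩
  · have f1 := u_meet_fst hA hS (fun p : A × A => p.1) (fun p => p.2)
    have f2 := u_meet_snd hA hS (fun p : A × A => p.1) (fun p => p.2)
    have e1 := ujN2 hA hS hj (utrans hA hS f1 (uj1 hS hj (fun p : A × A => p.1)))
    have e2 := ujN2 hA hS hj (utrans hA hS f2 (uj1 hS hj (fun p : A × A => p.2)))
    have goal := u_meet_pair hA hS e1 e2
    exact hS.up goal (le_iInf fun a => le_iInf fun b => iInf_le _ (a, b))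
  · have s1 := u_meet_fst hA hS (fun p : A × A => j p.1) (fun p => j p.2)
    have s2 := u_meet_snd hA hS (fun p : A × A => j p.1) (fun p => j p.2)
    have pair := u_pair hA hS
    have c1 := utrans hA hS pair
      (uB hA hS (fun p : A × A => p.2) (uj1 hS hj (fun p : A × A => meetA arr p.1 p.2)))
    have c2 := utrans hA hS c1
      (uj2 hS hj (fun p : A × A => p.2) (fun p : A × A => meetA arr p.1 p.2))
    have c3 := uflip1 hA hS c2
    have c4 := utrans hA hS c3
      (uj2 hS hj (fun p : A × A => p.1) (fun p : A × A => meetA arr p.1 p.2))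
    have c5 := uflip1 hA hS c4
    have c6 := utrans hA hS s1 c5
    have c7 := uapp hA hS c6 s2
    exact hS.up c7 (le_iInf fun a => le_iInf fun b => iInf_le _ (a, b))
  · intro X
    exact le_iInf fun x => le_iInf fun hx => hj.mono (iInf_le_of_le x (iInf_le _ hx))
end

section
/- Let A be an arrow algebra with separator S and let a ∈ A. Then the map j : A → A, j(x) := x + a, where x + a := ⨅_{c ∈ A} (x → ∂c) → ((a → ∂c) → ∂c), is a nucleus on A. -/
/-- The logical disjunction: `a + b := ⨅ c, (a → ∂c) → ((b → ∂c) → ∂c)`. -/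
def joinA {A : Type*} [CompleteLattice A] (arr : A → A → A) (a b : A) : A :=
  ⨅ c : A, arr (arr a (pd arr c)) (arr (arr b (pd arr c)) (pd arr c))

namespace ArrowAux

variable {A : Type*} [CompleteLattice A] {arr : A → A → A} {S : Set A}

/-- A family is realized if some single separator element lies below all members. -/
def Real (arr : A → A → A) (S : Set A) {ι : Type*} (σ : ι → A) : Prop :=
  ∃ t, t ∈ S ∧ ∀ i, t ≤ σ i

lemma app_le {t u c d : A} (h : t ≤ arr u (arr c d)) : appA arr t u ≤ arr c d :=
  sInf_le ⟨c, d, rfl, h⟩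

lemma app_mem (hS : IsSeparator arr S) {t u : A} (ht : t ∈ S) (hu : u ∈ S) :
    appA arr t u ∈ S := by
  set E : Set A := {e | ∃ c d : A, e = arr c d ∧ t ≤ arr u (arr c d)} with hE
  have hsub : E ⊆ Set.range fun p : A × A => arr p.1 p.2 := by
    rintro e ⟨c, d, rfl, -⟩; exact ⟨(c, d), rfl⟩
  have h1 : aC arr ≤ arr (⨅ b ∈ E, arr u b) (arr u (sInf E)) :=
    iInf_le_of_le u (iInf_le_of_le E (iInf_le _ hsub))
  have h2 : t ≤ ⨅ b ∈ E, arr u b := by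
    refine le_iInf₂ fun b hb => ?_
    obtain ⟨c, d, rfl, hle⟩ := hb
    exact hle
  have h3 : arr u (sInf E) ∈ S := hS.mp (hS.up hS.amem h1) (hS.up ht h2)
  exact hS.mp h3 hu

lemma real_mono {ι : Type*} {σ σ' : ι → A} (h : Real arr S σ) (hle : ∀ i, σ i ≤ σ' i) :
    Real arr S σ' :=
  let ⟨t, ht, hl⟩ := h; ⟨t, ht, fun i => (hl i).trans (hle i)⟩

lemma real_K (hS : IsSeparator arr S) {ι : Type*} (α β : ι → A) :
    Real arr S (fun i => arr (α i) (arr (β i) (α i))) :=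
  ⟨kC arr, hS.kmem, fun i => iInf_le_of_le (α i) (iInf_le _ (β i))⟩

lemma real_S (hS : IsSeparator arr S) {ι : Type*} (α β γ : ι → A) :
    Real arr S (fun i => arr (arr (α i) (arr (β i) (γ i)))
      (arr (arr (α i) (β i)) (arr (α i) (γ i)))) :=
  ⟨sC arr, hS.smem, fun i =>
    iInf_le_of_le (α i) (iInf_le_of_le (β i) (iInf_le _ (γ i)))⟩

lemma real_app (hA : IsArrow arr) (hS : IsSeparator arr S) {ι : Type*} {τ ρ : ι → A}
    (ht : Real arr S (fun i => arr (τ i) (ρ i))) (hu : Real arr S τ)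
    (hshape : ∀ i, ∃ c d : A, ρ i = arr c d) :
    Real arr S ρ := by
  obtain ⟨t, htS, htl⟩ := ht
  obtain ⟨u, huS, hul⟩ := hu
  refine ⟨appA arr t u, app_mem hS htS huS, fun i => ?_⟩
  obtain ⟨c, d, hcd⟩ := hshape i
  have h1 : t ≤ arr u (ρ i) := (htl i).trans (hA.mono (hul i) le_rfl)
  rw [hcd] at h1 ⊢
  exact app_le h1

lemma real_I (hA : IsArrow arr) (hS : IsSeparator arr S) {ι : Type*} (α : ι → A) :
    Real arr S (fun i => arr (α i) (α i)) := by
  have h1 := real_S hS α (fun i => arr (α i) (α i)) α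
  have h3 := real_app hA hS h1 (real_K hS α (fun i => arr (α i) (α i)))
      (fun i => ⟨_, _, rfl⟩)
  exact real_app hA hS h3 (real_K hS α α) (fun i => ⟨_, _, rfl⟩)

lemma real_B (hA : IsArrow arr) (hS : IsSeparator arr S) {ι : Type*} (W X Y : ι → A) :
    Real arr S (fun i => arr (arr (X i) (Y i))
      (arr (arr (W i) (X i)) (arr (W i) (Y i)))) := by
  have hKS := real_app hA hS
      (real_K hS (fun i => arr (arr (W i) (arr (X i) (Y i)))
          (arr (arr (W i) (X i)) (arr (W i) (Y i)))) (fun i => arr (X i) (Y i)))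
      (real_S hS W X Y) (fun i => ⟨_, _, rfl⟩)
  have h2 := real_app hA hS
      (real_S hS (fun i => arr (X i) (Y i)) (fun i => arr (W i) (arr (X i) (Y i)))
        (fun i => arr (arr (W i) (X i)) (arr (W i) (Y i))))
      hKS (fun i => ⟨_, _, rfl⟩)
  exact real_app hA hS h2 (real_K hS (fun i => arr (X i) (Y i)) W) (fun i => ⟨_, _, rfl⟩)

lemma real_comp (hA : IsArrow arr) (hS : IsSeparator arr S) {ι : Type*} {W X Y : ι → A}
    (hf : Real arr S (fun i => arr (X i) (Y i)))
    (hg : Real arr S (fun i => arr (W i) (X i))) :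
    Real arr S (fun i => arr (W i) (Y i)) :=
  real_app hA hS (real_app hA hS (real_B hA hS W X Y) hf (fun i => ⟨_, _, rfl⟩)) hg
    (fun i => ⟨_, _, rfl⟩)

/-- Interpretation of a typing context. -/
def Ctx (arr : A → A → A) {ι : Type*} : List (ι → A) → (ι → A) → ι → A
  | [], ρ => ρ
  | τ :: Γ, ρ => fun i => arr (τ i) (Ctx arr Γ ρ i)

/-- Sequents: realizability under a context. -/
def Seq (arr : A → A → A) (S : Set A) {ι : Type*} (Γ : List (ι → A)) (ρ : ι → A) : Prop :=
  Real arr S (Ctx arr Γ ρ)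

lemma ctx_shape {ι : Type*} {Γ : List (ι → A)} {ρ : ι → A}
    (h : ∀ i, ∃ c d : A, ρ i = arr c d) :
    ∀ i, ∃ c d : A, Ctx arr Γ ρ i = arr c d := by
  cases Γ with
  | nil => exact h
  | cons τ Γ => exact fun i => ⟨_, _, rfl⟩

lemma real_Sn (hA : IsArrow arr) (hS : IsSeparator arr S) {ι : Type*}
    (Γ : List (ι → A)) (τ ρ : ι → A) :
    Real arr S (fun i => arr (Ctx arr Γ (fun j => arr (τ j) (ρ j)) i)
      (arr (Ctx arr Γ τ i) (Ctx arr Γ ρ i))) := by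
  induction Γ with
  | nil => exact real_I hA hS _
  | cons γ Γ ih =>
      exact real_comp hA hS
        (real_S hS γ (fun i => Ctx arr Γ τ i) (fun i => Ctx arr Γ ρ i))
        (real_app hA hS
          (real_B hA hS γ (fun i => Ctx arr Γ (fun j => arr (τ j) (ρ j)) i)
            (fun i => arr (Ctx arr Γ τ i) (Ctx arr Γ ρ i)))
          ih (fun i => ⟨_, _, rfl⟩))

lemma appSeq (hA : IsArrow arr) (hS : IsSeparator arr S) {ι : Type*}
    {Γ : List (ι → A)} {τ ρ : ι → A}
    (ht : Seq arr S Γ (fun i => arr (τ i) (ρ i))) (hu : Seq arr S Γ τ)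
    (hshape : ∀ i, ∃ c d : A, ρ i = arr c d) : Seq arr S Γ ρ :=
  real_app hA hS (real_app hA hS (real_Sn hA hS Γ τ ρ) ht (fun i => ⟨_, _, rfl⟩)) hu
    (ctx_shape hshape)

lemma var0 (hA : IsArrow arr) (hS : IsSeparator arr S) {ι : Type*}
    (τ : ι → A) (Γ : List (ι → A)) : Seq arr S (τ :: Γ) τ := by
  induction Γ with
  | nil => exact real_I hA hS τ
  | cons γ Γ ih =>
      exact real_comp hA hS (real_K hS (fun i => Ctx arr Γ τ i) γ) ih

lemma weaken (hA : IsArrow arr) (hS : IsSeparator arr S) {ι : Type*}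
    (τ : ι → A) {Γ : List (ι → A)} {ρ : ι → A} (h : Seq arr S Γ ρ) :
    Seq arr S (τ :: Γ) ρ :=
  real_app hA hS (real_K hS (fun i => Ctx arr Γ ρ i) τ) h (fun i => ⟨_, _, rfl⟩)

lemma ctx_append {ι : Type*} (Γ : List (ι → A)) (τ ρ : ι → A) :
    Ctx arr (Γ ++ [τ]) ρ = Ctx arr Γ (fun i => arr (τ i) (ρ i)) := by
  induction Γ with
  | nil => rfl
  | cons γ Γ ih =>
      rw [List.cons_append]
      funext i
      show arr (γ i) (Ctx arr (Γ ++ [τ]) ρ i) = arr (γ i) (Ctx arr Γ (fun j => arr (τ j) (ρ j)) i)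
      rw [ih]

lemma absSeq {ι : Type*} {Γ : List (ι → A)} {τ ρ : ι → A}
    (h : Seq arr S (Γ ++ [τ]) ρ) : Seq arr S Γ (fun i => arr (τ i) (ρ i)) := by
  unfold Seq at h ⊢
  rwa [ctx_append] at h

lemma real_inf {ι κ : Type*} {σ : ι × κ → A} (h : Real arr S σ) :
    Real arr S (fun i : ι => ⨅ c : κ, σ (i, c)) :=
  let ⟨t, ht, hl⟩ := h; ⟨t, ht, fun i => le_iInf fun c => hl (i, c)⟩

lemma real_aInst (hS : IsSeparator arr S) {ι κ : Type*} (z : ι → A) (f : ι → κ → A)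
    (hf : ∀ i c, ∃ p q : A, f i c = arr p q) :
    Real arr S (fun i => arr (⨅ c, arr (z i) (f i c)) (arr (z i) (⨅ c, f i c))) := by
  refine ⟨aC arr, hS.amem, fun i => ?_⟩
  have hsub : Set.range (f i) ⊆ Set.range fun p : A × A => arr p.1 p.2 := by
    rintro b ⟨c, rfl⟩
    obtain ⟨p, q, hpq⟩ := hf i c
    exact ⟨(p, q), hpq.symm⟩
  have h1 : aC arr ≤ arr (⨅ b ∈ Set.range (f i), arr (z i) b)
      (arr (z i) (sInf (Set.range (f i)))) :=
    iInf_le_of_le (z i) (iInf_le_of_le (Set.range (f i)) (iInf_le _ hsub))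
  rwa [iInf_range, sInf_range] at h1

end ArrowAux

open ArrowAux in
/-- Lemma 7.3: for any `a`, the map `x ↦ x + a` is a nucleus. -/
theorem stmt18 {A : Type*} [CompleteLattice A] {arr : A → A → A} {S : Set A}
    (hA : IsArrow arr) (hS : IsSeparator arr S) (a : A) :
    IsNucleus arr S (fun x => joinA arr x a) := by
  -- `R x c` is the `c`-th component of `joinA arr x a`.
  have hjoin : ∀ x : A, joinA arr x a =
      ⨅ c : A, arr (arr x (pd arr c)) (arr (arr a (pd arr c)) (pd arr c)) := fun x => rfl
  refine ⟨?_, ?_, ?_⟩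
  · -- monotone
    intro x y hxy
    simp only [joinA]
    refine le_iInf fun c => ?_
    exact (iInf_le _ c).trans (hA.mono (hA.mono hxy le_rfl) le_rfl)
  · -- h1 : ⨅ x, x → j x ∈ S
    -- Step 1: the term  λx f g. f x  realizes  x → ((x→∂c) → ((a→∂c) → ∂c)).
    have hx : Seq arr S [(fun i : A × A => i.1), (fun i : A × A => arr i.1 (pd arr i.2)),
        (fun i : A × A => arr a (pd arr i.2))] (fun i : A × A => i.1) :=
      var0 hA hS _ _
    have hf : Seq arr S [(fun i : A × A => i.1), (fun i : A × A => arr i.1 (pd arr i.2)),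
        (fun i : A × A => arr a (pd arr i.2))] (fun i : A × A => arr i.1 (pd arr i.2)) :=
      weaken hA hS _ (var0 hA hS _ _)
    have hbody : Seq arr S [(fun i : A × A => i.1), (fun i : A × A => arr i.1 (pd arr i.2)),
        (fun i : A × A => arr a (pd arr i.2))] (fun i : A × A => pd arr i.2) :=
      appSeq hA hS (τ := fun i : A × A => i.1) (ρ := fun i : A × A => pd arr i.2)
        hf hx (fun i => ⟨⊤, i.2, rfl⟩)
    have step1 : Real arr S (fun i : A × A =>
        arr i.1 (arr (arr i.1 (pd arr i.2)) (arr (arr a (pd arr i.2)) (pd arr i.2)))) := hbody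
    have step2 : Real arr S (fun x : A => ⨅ c : A,
        arr x (arr (arr x (pd arr c)) (arr (arr a (pd arr c)) (pd arr c)))) :=
      real_inf step1
    have step3 := real_aInst hS (fun x : A => x)
        (fun x c => arr (arr x (pd arr c)) (arr (arr a (pd arr c)) (pd arr c)))
        (fun i c => ⟨_, _, rfl⟩)
    have step4 : Real arr S (fun x : A => arr x (⨅ c : A,
        arr (arr x (pd arr c)) (arr (arr a (pd arr c)) (pd arr c)))) :=
      real_app hA hS step3 step2 (fun i => ⟨_, _, rfl⟩)
    obtain ⟨t, htS, hle⟩ := step4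
    refine hS.up htS (le_iInf fun x => ?_)
    rw [hjoin x]
    exact hle x
  · -- h2 : ⨅ x y, (x → j y) → (j x → j y) ∈ S
    -- index i = ((x, y), c)
    -- families
    -- X = x, Pf = ∂c, Qf = a→∂c, F = y→∂c, R' = F→(Qf→Pf), Rx = (X→Pf)→(Qf→Pf)
    -- H = X→R', M = Rx.
    -- Step A: term  λh m f g. m (λx'. h x' f g) g.
    have hvh : Seq arr S [(fun i : (A × A) × A => arr i.1.1
          (arr (arr i.1.2 (pd arr i.2)) (arr (arr a (pd arr i.2)) (pd arr i.2)))),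
        (fun i : (A × A) × A => arr (arr i.1.1 (pd arr i.2))
          (arr (arr a (pd arr i.2)) (pd arr i.2))),
        (fun i : (A × A) × A => arr i.1.2 (pd arr i.2)),
        (fun i : (A × A) × A => arr a (pd arr i.2)),
        (fun i : (A × A) × A => i.1.1)]
        (fun i : (A × A) × A => arr i.1.1
          (arr (arr i.1.2 (pd arr i.2)) (arr (arr a (pd arr i.2)) (pd arr i.2)))) :=
      var0 hA hS _ _
    have hvx : Seq arr S [(fun i : (A × A) × A => arr i.1.1
          (arr (arr i.1.2 (pd arr i.2)) (arr (arr a (pd arr i.2)) (pd arr i.2)))),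
        (fun i : (A × A) × A => arr (arr i.1.1 (pd arr i.2))
          (arr (arr a (pd arr i.2)) (pd arr i.2))),
        (fun i : (A × A) × A => arr i.1.2 (pd arr i.2)),
        (fun i : (A × A) × A => arr a (pd arr i.2)),
        (fun i : (A × A) × A => i.1.1)]
        (fun i : (A × A) × A => i.1.1) :=
      weaken hA hS _ (weaken hA hS _ (weaken hA hS _ (weaken hA hS _ (var0 hA hS _ []))))
    have hvf : Seq arr S [(fun i : (A × A) × A => arr i.1.1
          (arr (arr i.1.2 (pd arr i.2)) (arr (arr a (pd arr i.2)) (pd arr i.2)))),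
        (fun i : (A × A) × A => arr (arr i.1.1 (pd arr i.2))
          (arr (arr a (pd arr i.2)) (pd arr i.2))),
        (fun i : (A × A) × A => arr i.1.2 (pd arr i.2)),
        (fun i : (A × A) × A => arr a (pd arr i.2)),
        (fun i : (A × A) × A => i.1.1)]
        (fun i : (A × A) × A => arr i.1.2 (pd arr i.2)) :=
      weaken hA hS _ (weaken hA hS _ (var0 hA hS _ _))
    have hvg : Seq arr S [(fun i : (A × A) × A => arr i.1.1
          (arr (arr i.1.2 (pd arr i.2)) (arr (arr a (pd arr i.2)) (pd arr i.2)))),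
        (fun i : (A × A) × A => arr (arr i.1.1 (pd arr i.2))
          (arr (arr a (pd arr i.2)) (pd arr i.2))),
        (fun i : (A × A) × A => arr i.1.2 (pd arr i.2)),
        (fun i : (A × A) × A => arr a (pd arr i.2)),
        (fun i : (A × A) × A => i.1.1)]
        (fun i : (A × A) × A => arr a (pd arr i.2)) :=
      weaken hA hS _ (weaken hA hS _ (weaken hA hS _ (var0 hA hS _ _)))
    have t1 := appSeq hA hS (τ := fun i : (A × A) × A => i.1.1)
      (ρ := fun i : (A × A) × A =>
        arr (arr i.1.2 (pd arr i.2)) (arr (arr a (pd arr i.2)) (pd arr i.2)))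
      hvh hvx (fun i => ⟨_, _, rfl⟩)
    have t2 := appSeq hA hS (τ := fun i : (A × A) × A => arr i.1.2 (pd arr i.2))
      (ρ := fun i : (A × A) × A => arr (arr a (pd arr i.2)) (pd arr i.2))
      t1 hvf (fun i => ⟨_, _, rfl⟩)
    have t3 := appSeq hA hS (τ := fun i : (A × A) × A => arr a (pd arr i.2))
      (ρ := fun i : (A × A) × A => pd arr i.2)
      t2 hvg (fun i => ⟨⊤, i.2, rfl⟩)
    have inner : Seq arr S [(fun i : (A × A) × A => arr i.1.1
          (arr (arr i.1.2 (pd arr i.2)) (arr (arr a (pd arr i.2)) (pd arr i.2)))),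
        (fun i : (A × A) × A => arr (arr i.1.1 (pd arr i.2))
          (arr (arr a (pd arr i.2)) (pd arr i.2))),
        (fun i : (A × A) × A => arr i.1.2 (pd arr i.2)),
        (fun i : (A × A) × A => arr a (pd arr i.2))]
        (fun i : (A × A) × A => arr i.1.1 (pd arr i.2)) :=
      absSeq (τ := fun i : (A × A) × A => i.1.1) (ρ := fun i : (A × A) × A => pd arr i.2) t3
    have hvm : Seq arr S [(fun i : (A × A) × A => arr i.1.1
          (arr (arr i.1.2 (pd arr i.2)) (arr (arr a (pd arr i.2)) (pd arr i.2)))),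
        (fun i : (A × A) × A => arr (arr i.1.1 (pd arr i.2))
          (arr (arr a (pd arr i.2)) (pd arr i.2))),
        (fun i : (A × A) × A => arr i.1.2 (pd arr i.2)),
        (fun i : (A × A) × A => arr a (pd arr i.2))]
        (fun i : (A × A) × A => arr (arr i.1.1 (pd arr i.2))
          (arr (arr a (pd arr i.2)) (pd arr i.2))) :=
      weaken hA hS _ (var0 hA hS _ _)
    have hvg2 : Seq arr S [(fun i : (A × A) × A => arr i.1.1
          (arr (arr i.1.2 (pd arr i.2)) (arr (arr a (pd arr i.2)) (pd arr i.2)))),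
        (fun i : (A × A) × A => arr (arr i.1.1 (pd arr i.2))
          (arr (arr a (pd arr i.2)) (pd arr i.2))),
        (fun i : (A × A) × A => arr i.1.2 (pd arr i.2)),
        (fun i : (A × A) × A => arr a (pd arr i.2))]
        (fun i : (A × A) × A => arr a (pd arr i.2)) :=
      weaken hA hS _ (weaken hA hS _ (weaken hA hS _ (var0 hA hS _ [])))
    have u1 := appSeq hA hS (τ := fun i : (A × A) × A => arr i.1.1 (pd arr i.2))
      (ρ := fun i : (A × A) × A => arr (arr a (pd arr i.2)) (pd arr i.2))
      hvm inner (fun i => ⟨_, _, rfl⟩)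
    have u2 := appSeq hA hS (τ := fun i : (A × A) × A => arr a (pd arr i.2))
      (ρ := fun i : (A × A) × A => pd arr i.2)
      u1 hvg2 (fun i => ⟨⊤, i.2, rfl⟩)
    -- u2 : Real (H → (M → (F → (Qf → Pf))))
    have stepA : Real arr S (fun i : (A × A) × A =>
        arr (arr i.1.1 (arr (arr i.1.2 (pd arr i.2))
            (arr (arr a (pd arr i.2)) (pd arr i.2))))
          (arr (arr (arr i.1.1 (pd arr i.2)) (arr (arr a (pd arr i.2)) (pd arr i.2)))
            (arr (arr i.1.2 (pd arr i.2)) (arr (arr a (pd arr i.2)) (pd arr i.2))))) := u2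
    -- subtyping step: weaken hypothesis types to (x → j y) and (j x)
    have stepA' : Real arr S (fun i : (A × A) × A =>
        arr (arr i.1.1 (joinA arr i.1.2 a))
          (arr (joinA arr i.1.1 a)
            (arr (arr i.1.2 (pd arr i.2)) (arr (arr a (pd arr i.2)) (pd arr i.2))))) := by
      refine real_mono stepA fun i => ?_
      have hxy : arr i.1.1 (joinA arr i.1.2 a) ≤
          arr i.1.1 (arr (arr i.1.2 (pd arr i.2))
            (arr (arr a (pd arr i.2)) (pd arr i.2))) := by
        refine hA.mono le_rfl ?_
        rw [hjoin i.1.2]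
        exact iInf_le _ i.2
      have hjx : joinA arr i.1.1 a ≤
          arr (arr i.1.1 (pd arr i.2)) (arr (arr a (pd arr i.2)) (pd arr i.2)) := by
        rw [hjoin i.1.1]
        exact iInf_le _ i.2
      exact hA.mono hxy (hA.mono hjx le_rfl)
    have stepB0 : Real arr S (fun p : A × A => ⨅ c : A,
        arr (arr p.1 (joinA arr p.2 a))
          (arr (joinA arr p.1 a)
            (arr (arr p.2 (pd arr c)) (arr (arr a (pd arr c)) (pd arr c))))) :=
      real_inf stepA'
    have stepB1 := real_aInst hS (fun p : A × A => arr p.1 (joinA arr p.2 a))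
      (fun p c => arr (joinA arr p.1 a)
        (arr (arr p.2 (pd arr c)) (arr (arr a (pd arr c)) (pd arr c))))
      (fun i c => ⟨_, _, rfl⟩)
    have stepB2 : Real arr S (fun p : A × A =>
        arr (arr p.1 (joinA arr p.2 a)) (⨅ c : A, arr (joinA arr p.1 a)
          (arr (arr p.2 (pd arr c)) (arr (arr a (pd arr c)) (pd arr c))))) :=
      real_app hA hS stepB1 stepB0 (fun i => ⟨_, _, rfl⟩)
    have stepC := real_aInst hS (fun p : A × A => joinA arr p.1 a)
      (fun p c => arr (arr p.2 (pd arr c)) (arr (arr a (pd arr c)) (pd arr c)))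
      (fun i c => ⟨_, _, rfl⟩)
    have stepD : Real arr S (fun p : A × A =>
        arr (arr p.1 (joinA arr p.2 a))
          (arr (joinA arr p.1 a) (⨅ c : A,
            arr (arr p.2 (pd arr c)) (arr (arr a (pd arr c)) (pd arr c))))) :=
      real_comp hA hS stepC stepB2
    obtain ⟨t, htS, hle⟩ := stepD
    exact hS.up htS (le_iInf fun x => le_iInf fun y => hle (x, y))
end

section
/- Let A = (A, ≼, →, S) be a binary implicative arrow algebra (i.e., a → (b ⊓ b') = (a → b) ⊓ (a → b') for all a, b, b' ∈ A). Define A^→ := { (x_0, x_1) ∈ A × A | x_0 ≼ x_1 }, ordered componentwise (a complete lattice), with implication x → y := ( (x_0 → y_0) ⊓ (x_1 → y_1), x_1 → y_1 ). Then A^→ is an arrow structure, and S^→ := { x ∈ A^→ | x_0 ∈ S } is a separator on it: S^→ is upward closed, closed under modus ponens, and contains the combinators 𝐤, 𝐬 and 𝐚 of the arrow structure A^→. -/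
/-- The Sierpiński construction: pairs `(x₀, x₁)` with `x₀ ≼ x₁`. -/
def SP (A : Type*) [CompleteLattice A] : Type _ := {p : A × A // p.1 ≤ p.2}

instance {A : Type*} [CompleteLattice A] : PartialOrder (SP A) :=
  Subtype.partialOrder _

instance {A : Type*} [CompleteLattice A] : InfSet (SP A) :=
  ⟨fun s => ⟨(⨅ p ∈ s, (p : SP A).val.1, ⨅ p ∈ s, (p : SP A).val.2),
    iInf₂_mono fun p _ => p.prop⟩⟩

/-- `A^→` ordered componentwise is a complete lattice. -/
noncomputable instance {A : Type*} [CompleteLattice A] : CompleteLattice (SP A) :=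
  completeLatticeOfInf _ (fun s => by
    constructor
    · intro q hq
      show (sInf s).val ≤ q.val
      exact ⟨iInf₂_le q hq, iInf₂_le q hq⟩
    · intro T hT
      show T.val ≤ (sInf s).val
      exact ⟨le_iInf₂ fun p hp => (hT hp).1, le_iInf₂ fun p hp => (hT hp).2⟩)

/-- The implication on `A^→`:
`x → y := ((x₀ → y₀) ⊓ (x₁ → y₁), x₁ → y₁)`. -/
def spArr {A : Type*} [CompleteLattice A] (arr : A → A → A) (x y : SP A) : SP A :=
  ⟨(arr x.val.1 y.val.1 ⊓ arr x.val.2 y.val.2, arr x.val.2 y.val.2), inf_le_right⟩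

section AuxLemmas

variable {A : Type*} [CompleteLattice A]

lemma sp_sInf_fst (s : Set (SP A)) : (sInf s).val.1 = ⨅ p ∈ s, (p : SP A).val.1 := rfl

lemma sp_sInf_snd (s : Set (SP A)) : (sInf s).val.2 = ⨅ p ∈ s, (p : SP A).val.2 := rfl

lemma sp_iInf_fst {ι : Sort*} (f : ι → SP A) : (⨅ i, f i).val.1 = ⨅ i, (f i).val.1 := by
  show (sInf (Set.range f)).val.1 = _
  rw [sp_sInf_fst, iInf_range]

lemma sp_iInf_snd {ι : Sort*} (f : ι → SP A) : (⨅ i, f i).val.2 = ⨅ i, (f i).val.2 := by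
  show (sInf (Set.range f)).val.2 = _
  rw [sp_sInf_snd, iInf_range]

lemma kC_le (arr : A → A → A) (a b : A) : kC arr ≤ arr a (arr b a) := by
  unfold kC; exact iInf_le_of_le a (iInf_le _ b)

lemma sC_le (arr : A → A → A) (a b c : A) :
    sC arr ≤ arr (arr a (arr b c)) (arr (arr a b) (arr a c)) := by
  unfold sC; exact iInf_le_of_le a (iInf_le_of_le b (iInf_le _ c))

lemma aC_le (arr : A → A → A) (x : A) (B : Set A)
    (hB : B ⊆ Set.range fun p : A × A => arr p.1 p.2) :
    aC arr ≤ arr (⨅ b ∈ B, arr x b) (arr x (sInf B)) := by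
  unfold aC; exact iInf_le_of_le x (iInf_le_of_le B (iInf_le _ hB))

end AuxLemmas

/-- Proposition A.1 (Sierpiński construction): if `A` is a binary implicative
arrow algebra, then `A^→` is an arrow structure and
`S^→ := { x | x₀ ∈ S }` is a separator on it. -/
theorem stmt19 {A : Type*} [CompleteLattice A] {arr : A → A → A} {S : Set A}
    (hA : IsArrow arr) (hS : IsSeparator arr S)
    (hbin : ∀ a b b' : A, arr a (b ⊓ b') = arr a b ⊓ arr a b') :
    IsArrow (spArr arr) ∧
    IsSeparator (spArr arr) {x : SP A | x.val.1 ∈ S} := by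
  constructor
  · exact ⟨fun h1 h2 =>
      ⟨inf_le_inf (hA.mono h1.1 h2.1) (hA.mono h1.2 h2.2), hA.mono h1.2 h2.2⟩⟩
  constructor
  · -- upward closed
    intro a b ha hab
    exact hS.up ha hab.1
  · -- modus ponens
    intro a b hab ha
    exact hS.mp (hS.up hab inf_le_left) ha
  · -- k
    refine hS.up hS.kmem ?_
    show kC arr ≤ (kC (spArr arr)).val.1
    simp only [kC, sp_iInf_fst]
    refine le_iInf fun a => le_iInf fun b => ?_
    show kC arr ≤
      arr a.val.1 (arr b.val.1 a.val.1 ⊓ arr b.val.2 a.val.2) ⊓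
        arr a.val.2 (arr b.val.2 a.val.2)
    rw [hbin]
    refine le_inf (le_inf ?_ ?_) ?_
    · exact kC_le arr a.val.1 b.val.1
    · exact (kC_le arr a.val.1 b.val.2).trans (hA.mono le_rfl (hA.mono le_rfl a.prop))
    · exact kC_le arr a.val.2 b.val.2
  · -- s
    refine hS.up hS.smem ?_
    show sC arr ≤ (sC (spArr arr)).val.1
    simp only [sC, sp_iInf_fst]
    refine le_iInf fun a => le_iInf fun b => le_iInf fun c => ?_
    show sC arr ≤
      arr (arr a.val.1 (arr b.val.1 c.val.1 ⊓ arr b.val.2 c.val.2) ⊓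
            arr a.val.2 (arr b.val.2 c.val.2))
          (arr (arr a.val.1 b.val.1 ⊓ arr a.val.2 b.val.2)
              (arr a.val.1 c.val.1 ⊓ arr a.val.2 c.val.2) ⊓
            arr (arr a.val.2 b.val.2) (arr a.val.2 c.val.2)) ⊓
        arr (arr a.val.2 (arr b.val.2 c.val.2))
          (arr (arr a.val.2 b.val.2) (arr a.val.2 c.val.2))
    simp only [hbin]
    refine le_inf (le_inf (le_inf ?_ ?_) ?_) ?_
    · exact (sC_le arr a.val.1 b.val.1 c.val.1).trans
        (hA.mono (inf_le_left.trans inf_le_left) (hA.mono inf_le_left le_rfl))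
    · exact (sC_le arr a.val.2 b.val.2 c.val.2).trans
        (hA.mono inf_le_right (hA.mono inf_le_right le_rfl))
    · exact (sC_le arr a.val.2 b.val.2 c.val.2).trans
        (hA.mono inf_le_right le_rfl)
    · exact sC_le arr a.val.2 b.val.2 c.val.2
  · -- a
    refine hS.up hS.amem ?_
    show aC arr ≤ (aC (spArr arr)).val.1
    simp only [aC, sp_iInf_fst]
    refine le_iInf fun x => le_iInf fun B => le_iInf fun hB => ?_
    set L : SP A := ⨅ b ∈ B, spArr arr x b with hLdef
    have hL1 : L.val.1 = ⨅ b ∈ B, (arr x.val.1 b.val.1 ⊓ arr x.val.2 b.val.2) := by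
      rw [hLdef]; simp only [sp_iInf_fst]; rfl
    have hL2 : L.val.2 = ⨅ b ∈ B, arr x.val.2 b.val.2 := by
      rw [hLdef]; simp only [sp_iInf_snd]; rfl
    have hsB1 : (sInf B).val.1 = ⨅ b ∈ B, (b : SP A).val.1 := rfl
    have hsB2 : (sInf B).val.2 = ⨅ b ∈ B, (b : SP A).val.2 := rfl
    show aC arr ≤
      arr L.val.1 (arr x.val.1 (sInf B).val.1 ⊓ arr x.val.2 (sInf B).val.2) ⊓
        arr L.val.2 (arr x.val.2 (sInf B).val.2)
    rw [hbin]
    have hthird : aC arr ≤ arr L.val.2 (arr x.val.2 (sInf B).val.2) := by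
      have hB1 : (fun b : SP A => b.val.2) '' B ⊆
          Set.range fun p : A × A => arr p.1 p.2 := by
        rintro c ⟨b, hb, rfl⟩
        obtain ⟨p, rfl⟩ := hB hb
        exact ⟨(p.1.val.2, p.2.val.2), rfl⟩
      have := aC_le arr x.val.2 ((fun b : SP A => b.val.2) '' B) hB1
      rw [sInf_image, iInf_image] at this
      rw [hL2, hsB2]
      exact this
    refine le_inf (le_inf ?_ ?_) hthird
    · -- first component: uses the set C of all arrows appearing in first coordinates
      set C : Set A := {c | ∃ p : SP A × SP A, spArr arr p.1 p.2 ∈ B ∧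
        (c = arr p.1.val.1 p.2.val.1 ∨ c = arr p.1.val.2 p.2.val.2)} with hCdef
      have hC : C ⊆ Set.range fun p : A × A => arr p.1 p.2 := by
        rintro c ⟨p, hp, rfl | rfl⟩
        · exact ⟨(p.1.val.1, p.2.val.1), rfl⟩
        · exact ⟨(p.1.val.2, p.2.val.2), rfl⟩
      have h1 : sInf C = ⨅ b ∈ B, (b : SP A).val.1 := by
        apply le_antisymm
        · refine le_iInf₂ fun b hb => ?_
          obtain ⟨p, rfl⟩ := hB hb
          exact le_inf (sInf_le ⟨p, hb, Or.inl rfl⟩) (sInf_le ⟨p, hb, Or.inr rfl⟩)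
        · refine le_sInf fun c hc => ?_
          obtain ⟨p, hpB, rfl | rfl⟩ := hc
          · exact (iInf₂_le _ hpB).trans inf_le_left
          · exact (iInf₂_le _ hpB).trans inf_le_right
      have h2 : L.val.1 ≤ ⨅ c ∈ C, arr x.val.1 c := by
        rw [hL1]
        refine le_iInf₂ fun c hc => ?_
        obtain ⟨p, hpB, rfl | rfl⟩ := hc
        · exact ((iInf₂_le _ hpB).trans inf_le_left).trans
            (hA.mono le_rfl inf_le_left)
        · exact ((iInf₂_le _ hpB).trans inf_le_left).trans
            (hA.mono le_rfl inf_le_right)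
      refine (aC_le arr x.val.1 C hC).trans (hA.mono h2 (hA.mono le_rfl ?_))
      rw [h1, hsB1]
    · -- second component: follows from the third since L.val.1 ≤ L.val.2
      exact hthird.trans (hA.mono L.prop le_rfl)
end
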